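/- arXiv:2005.05698 — 8 statements merged into one kernel-verified Lean document; each statement's English description precedes it below -/
import Mathlib

section
/- Let q be a prime power, n ≥ 1, F = 𝔽_{q^n}, and let m be a positive integer with gcd(m,n) = 1. Let A = (a_{ij}) be a nonzero 2×2 matrix over F and let Γ = {[x] ∈ PG(1,q^n) : a₁₁x₁^{q^m+1} + a₁₂x₁x₂^{q^m} + a₂₁x₂x₁^{q^m} + a₂₂x₂^{q^m+1} = 0} be the set of absolute points of the induced correlation. Then the cardinality of Γ belongs to {0, 1, 2, q+1}. -/
/-!
Write `B(x, y) = xᵀ A σ(y)` with `σ x = x ^ q ^ m`. If `Γ` has three distinct points, rescale their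
representatives to `u`, `w`, `u + w`. Expanding `B(u + w, u + w) = 0` gives `B(w, u) = -B(u, w)`,
hence `B(t u + w, t u + w) = (t - σ t) B(u, w)`, and `B(u, w) ≠ 0` because otherwise `B`, and so
`A`, would vanish on the basis `u, w`. So in the chart `∞ ↦ [u]`, `t ↦ [t u + w]` of the
projective line, `Γ` is `∞` together with the fixed field of `σ`, which is `𝔽_q` as
`gcd(m, n) = 1`: `|Γ| = q + 1`.
-/

open scoped LinearAlgebra.Projectivization OnePoint
open Function Module Projectivization

lemma Function.fixedPoints_iterate_of_coprime {α : Type*} {f : α → α} {m n : ℕ}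
    (hn : f^[n] = id) (hmn : m.Coprime n) : fixedPoints f^[m] = fixedPoints f := by
  ext x
  refine ⟨fun hx => ?_, fun hx => IsFixedPt.iterate hx m⟩
  have hxn : IsPeriodicPt f n x := by simp [IsPeriodicPt, hn, IsFixedPt]
  simpa [IsPeriodicPt, hmn.gcd_eq_one] using IsPeriodicPt.gcd hx hxn

namespace FiniteField

variable {F : Type*} [Field F] [Fintype F] {q n : ℕ}

lemma ncard_fixedPoints_pow (hF : Fintype.card F = q ^ n) :
    (fixedPoints fun x : F => x ^ q).ncard = q := by
  classical
  have hq : 1 < q := by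
    by_contra! h
    have := Fintype.one_lt_card (α := F)
    rw [hF] at this
    exact this.not_ge (pow_le_one' h n)
  obtain ⟨d, rfl⟩ : ∃ d, q = d + 1 := ⟨q - 1, by omega⟩
  have hd : 0 < d := by omega
  obtain ⟨ζ, hζ⟩ : ∃ ζ : F, IsPrimitiveRoot ζ d := by
    obtain ⟨g, hg⟩ := IsCyclic.exists_ofOrder_eq_natCard (α := Fˣ)
    have hdg : d ∣ orderOf g := by
      rw [hg, Nat.card_eq_fintype_card, Fintype.card_units, hF]
      simpa using Nat.sub_one_dvd_pow_sub_one (d + 1) n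
    refine ⟨(g ^ (orderOf g / d) : Fˣ), IsPrimitiveRoot.coe_units_iff.mpr ?_⟩
    convert IsPrimitiveRoot.orderOf (g ^ (orderOf g / d))
    exact (orderOf_pow_orderOf_div (orderOf_pos g).ne' hdg).symm
  have hfix : (fixedPoints fun x : F => x ^ (d + 1)) =
      insert 0 (Polynomial.nthRootsFinset d (1 : F)) := by
    ext x
    rw [Finset.coe_insert, Set.mem_insert_iff, Finset.mem_coe, Polynomial.mem_nthRootsFinset hd,
      mem_fixedPoints, IsFixedPt, pow_succ', ← sub_eq_zero, ← mul_sub_one, mul_eq_zero, sub_eq_zero]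
  rw [hfix, Set.ncard_coe_finset, Finset.card_insert_of_notMem
    (by simp [Polynomial.mem_nthRootsFinset hd, hd.ne']), hζ.card_nthRootsFinset]

lemma ncard_fixedPoints_pow_pow_of_coprime (hF : Fintype.card F = q ^ n) {m : ℕ}
    (hmn : m.Coprime n) : (fixedPoints fun x : F => x ^ q ^ m).ncard = q := by
  have hn : (fun x : F => x ^ q)^[n] = id := by
    rw [pow_iterate, ← hF]
    exact funext pow_card
  rw [← pow_iterate, fixedPoints_iterate_of_coprime hn hmn, ncard_fixedPoints_pow hF]

end FiniteField

section ProjectiveLine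

variable {K V W : Type*} [Field K] [AddCommGroup V] [Module K V] [AddCommGroup W] [Module K W]

def Projectivization.mapEquiv (e : V ≃ₗ[K] W) : ℙ K V ≃ ℙ K W where
  toFun := map (e : V →ₗ[K] W) e.injective
  invFun := map (e.symm : W →ₗ[K] V) e.symm.injective
  left_inv p := by induction p using ind with | h v hv => simp [map_mk]
  right_inv p := by induction p using ind with | h v hv => simp [map_mk]

lemma Module.Basis.smul_add_ne_zero (b : Basis (Fin 2) K V) (t : K) : t • b 0 + b 1 ≠ 0 := by
  intro h
  simpa [Finsupp.single_apply] using congrArg (fun v => b.repr v 1) h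

open Classical in
noncomputable def Module.Basis.onePointEquiv (b : Basis (Fin 2) K V) : OnePoint K ≃ ℙ K V :=
  (OnePoint.equivProjectivization K).trans (mapEquiv b.equivFun.symm)

lemma Module.Basis.onePointEquiv_infty (b : Basis (Fin 2) K V) :
    b.onePointEquiv ∞ = Projectivization.mk K (b 0) (b.ne_zero 0) := by
  simp [onePointEquiv, mapEquiv, map_mk]

lemma Module.Basis.onePointEquiv_coe (b : Basis (Fin 2) K V) (t : K) :
    b.onePointEquiv t = Projectivization.mk K (t • b 0 + b 1) (b.smul_add_ne_zero t) := by
  simp [onePointEquiv, mapEquiv, map_mk]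

end ProjectiveLine

section AbsolutePoints

variable {K V : Type*} [Field K] [AddCommGroup V] [Module K V] {σ : K →+* K}
  (B : V →ₗ[K] V →ₛₗ[σ] K)

def absolutePoints : Set (ℙ K V) := {P | B P.rep P.rep = 0}

lemma mem_absolutePoints {P : ℙ K V} : P ∈ absolutePoints B ↔ B P.rep P.rep = 0 := Iff.rfl

lemma mk_mem_absolutePoints {v : V} (hv : v ≠ 0) :
    mk K v hv ∈ absolutePoints B ↔ B v v = 0 := by
  obtain ⟨a, ha⟩ := exists_smul_eq_mk_rep K v hv
  simp [absolutePoints, ← ha, Units.smul_def]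

variable {B}

lemma apply_smul_add_self {u w : V} (hu : B u u = 0) (hw : B w w = 0)
    (huw : B (u + w) (u + w) = 0) (t : K) :
    B (t • u + w) (t • u + w) = (t - σ t) * B u w := by
  have hwu : B w u = -B u w := by
    simp only [map_add, LinearMap.add_apply, hu, hw] at huw
    linear_combination huw
  simp only [map_add, map_smul, map_smulₛₗ, LinearMap.add_apply, LinearMap.smul_apply,
    smul_eq_mul, hu, hw, hwu]
  ring

lemma apply_basis_zero_one_ne_zero (hB : B ≠ 0) {b : Basis (Fin 2) K V}
    (h0 : B (b 0) (b 0) = 0) (h1 : B (b 1) (b 1) = 0) (h01 : B (b 0 + b 1) (b 0 + b 1) = 0) :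
    B (b 0) (b 1) ≠ 0 := by
  intro hβ
  have h10 : B (b 1) (b 0) = 0 := by
    simpa [h0, h1, hβ] using apply_smul_add_self h0 h1 h01 1
  refine hB (LinearMap.ext_basis b b fun i j => ?_)
  fin_cases i <;> fin_cases j <;> simpa

lemma onePointEquiv_preimage_absolutePoints {b : Basis (Fin 2) K V} (h0 : B (b 0) (b 0) = 0)
    (h1 : B (b 1) (b 1) = 0) (h01 : B (b 0 + b 1) (b 0 + b 1) = 0) (hβ : B (b 0) (b 1) ≠ 0) :
    b.onePointEquiv ⁻¹' absolutePoints B = insert ∞ ((↑) '' fixedPoints σ) := by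
  ext p
  induction p using OnePoint.rec with
  | infty => simpa [Basis.onePointEquiv_infty, mk_mem_absolutePoints] using h0
  | coe t =>
    rw [Set.mem_preimage, Basis.onePointEquiv_coe, mk_mem_absolutePoints,
      apply_smul_add_self h0 h1 h01, mul_eq_zero, or_iff_left hβ, sub_eq_zero]
    simp [IsFixedPt, eq_comm]

lemma exists_basis_of_three_absolutePoints (hV : finrank K V = 2) {P₁ P₂ P₃ : ℙ K V}
    (h₁ : P₁ ∈ absolutePoints B) (h₂ : P₂ ∈ absolutePoints B) (h₃ : P₃ ∈ absolutePoints B)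
    (h₁₂ : P₁ ≠ P₂) (h₁₃ : P₁ ≠ P₃) (h₂₃ : P₂ ≠ P₃) :
    ∃ b : Basis (Fin 2) K V, B (b 0) (b 0) = 0 ∧ B (b 1) (b 1) = 0 ∧
      B (b 0 + b 1) (b 0 + b 1) = 0 := by
  let b₀ := basisOfLinearIndependentOfCardEqFinrank (linearIndependent_pair_iff_ne.mpr h₁₂)
    (by simp [hV])
  have hb₀ : ⇑b₀ = ![P₁.rep, P₂.rep] := coe_basisOfLinearIndependentOfCardEqFinrank _ _
  set c := b₀.repr P₃.rep
  have hsum : c 0 • P₁.rep + c 1 • P₂.rep = P₃.rep := by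
    simpa [Fin.sum_univ_two, hb₀] using b₀.sum_repr P₃.rep
  have hc₀ : c 0 ≠ 0 := by
    intro h
    have := LinearIndependent.pair_iff.mp (linearIndependent_pair_iff_ne.mpr h₂₃) (c 1) (-1)
    simp_all
  have hc₁ : c 1 ≠ 0 := by
    intro h
    have := LinearIndependent.pair_iff.mp (linearIndependent_pair_iff_ne.mpr h₁₃) (c 0) (-1)
    simp_all
  refine ⟨b₀.unitsSMul ![Units.mk0 _ hc₀, Units.mk0 _ hc₁], ?_, ?_, ?_⟩ <;>
    simp_all [mem_absolutePoints, Basis.unitsSMul_apply]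

theorem encard_absolutePoints_eq_encard_fixedPoints_add_one (hV : finrank K V = 2) (hB : B ≠ 0)
    {P₁ P₂ P₃ : ℙ K V} (h₁ : P₁ ∈ absolutePoints B) (h₂ : P₂ ∈ absolutePoints B)
    (h₃ : P₃ ∈ absolutePoints B) (h₁₂ : P₁ ≠ P₂) (h₁₃ : P₁ ≠ P₃) (h₂₃ : P₂ ≠ P₃) :
    (absolutePoints B).encard = (fixedPoints σ).encard + 1 := by
  obtain ⟨b, h0, h1, h01⟩ := exists_basis_of_three_absolutePoints hV h₁ h₂ h₃ h₁₂ h₁₃ h₂₃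
  rw [← Set.encard_preimage_of_bijective b.onePointEquiv.bijective,
    onePointEquiv_preimage_absolutePoints h0 h1 h01 (apply_basis_zero_one_ne_zero hB h0 h1 h01),
    Set.encard_insert_of_notMem (by simp), OnePoint.coe_injective.encard_image]

end AbsolutePoints

lemma Matrix.toLinearMapₛₗ₂'_apply_self_fin_two {K : Type*} [Field K] (σ : K →+* K)
    (A : Matrix (Fin 2) (Fin 2) K) (x : Fin 2 → K) :
    Matrix.toLinearMapₛₗ₂' K (RingHom.id K) σ A x x =
      A 0 0 * x 0 * σ (x 0) + A 0 1 * x 0 * σ (x 1) + A 1 0 * x 1 * σ (x 0) +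
        A 1 1 * x 1 * σ (x 1) := by
  simp only [Matrix.toLinearMapₛₗ₂'_apply, Fin.sum_univ_two, RingHom.id_apply, smul_eq_mul]
  ring

theorem absolute_points_PG1_card_general
    (q n m : ℕ) (hq : IsPrimePow q)
    (hmn : Nat.gcd m n = 1)
    (F : Type*) [Field F] [Fintype F] (hF : Fintype.card F = q ^ n)
    (A : Matrix (Fin 2) (Fin 2) F) (hA : A ≠ 0)
    (Γ : Set (ℙ F (Fin 2 → F)))
    (hΓ : Γ = {P : ℙ F (Fin 2 → F) |
      A 0 0 * (P.rep 0) ^ (q ^ m + 1) + A 0 1 * P.rep 0 * (P.rep 1) ^ (q ^ m) +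
        A 1 0 * P.rep 1 * (P.rep 0) ^ (q ^ m) + A 1 1 * (P.rep 1) ^ (q ^ m + 1) = 0}) :
    Γ.ncard ∈ ({0, 1, 2, q + 1} : Set ℕ) := by
  obtain ⟨p, k, hp, -, rfl⟩ := hq
  have : Fact p.Prime := ⟨Nat.prime_iff.mpr hp⟩
  have : CharP F p := charP_of_card_eq_prime_pow (hF.trans (pow_mul p k n).symm)
  set σ := iterateFrobenius F p (k * m)
  have hσ : ⇑σ = fun x => x ^ (p ^ k) ^ m := by
    ext x
    rw [iterateFrobenius_def, pow_mul]
  set B := Matrix.toLinearMapₛₗ₂' F (RingHom.id F) σ A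
  have hΓB : Γ = absolutePoints B := by
    ext P
    rw [hΓ, mem_absolutePoints, Matrix.toLinearMapₛₗ₂'_apply_self_fin_two, hσ]
    show _ = 0 ↔ _ = 0
    ring_nf
  rcases le_or_gt Γ.ncard 2 with hle | hlt
  · interval_cases Γ.ncard <;> simp
  obtain ⟨P₁, h₁, P₂, h₂, P₃, h₃, h₁₂, h₁₃, h₂₃⟩ := (Set.two_lt_ncard (Set.toFinite Γ)).mp hlt
  rw [hΓB] at h₁ h₂ h₃ ⊢
  have hB : B ≠ 0 := (Matrix.toLinearMapₛₗ₂' F (RingHom.id F) σ).map_ne_zero_iff.mpr hA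
  have hcard := encard_absolutePoints_eq_encard_fixedPoints_add_one (by simp) hB h₁ h₂ h₃ h₁₂ h₁₃ h₂₃
  rw [← (Set.toFinite _).cast_ncard_eq, ← (Set.toFinite _).cast_ncard_eq, hσ,
    FiniteField.ncard_fixedPoints_pow_pow_of_coprime hF hmn] at hcard
  simp [(by exact_mod_cast hcard : (absolutePoints B).ncard = p ^ k + 1)]

/-- The set of absolute points in PG(1,qⁿ) of the correlation induced by a
σ-sesquilinear form (with σ : x ↦ x^(q^m), gcd(m,n)=1) given by a nonzero 2×2 matrix A
has cardinality 0, 1, 2 or q+1. -/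
theorem absolute_points_PG1_card
    (q n m : ℕ) (hq : IsPrimePow q) (hn : 1 ≤ n) (hm : 0 < m)
    (hmn : Nat.gcd m n = 1)
    (F : Type*) [Field F] [Fintype F] (hF : Fintype.card F = q ^ n)
    (A : Matrix (Fin 2) (Fin 2) F) (hA : A ≠ 0)
    (Γ : Set (ℙ F (Fin 2 → F)))
    (hΓ : Γ = {P : ℙ F (Fin 2 → F) |
      A 0 0 * (P.rep 0) ^ (q ^ m + 1) + A 0 1 * P.rep 0 * (P.rep 1) ^ (q ^ m) +
        A 1 0 * P.rep 1 * (P.rep 0) ^ (q ^ m) + A 1 1 * (P.rep 1) ^ (q ^ m + 1) = 0}) :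
    Γ.ncard ∈ ({0, 1, 2, q + 1} : Set ℕ) :=
  absolute_points_PG1_card_general q n m hq hmn F hF A hA Γ hΓ
end

section
/- Let q be a prime power, n ≥ 1, F = 𝔽_{q^n}, m a positive integer with gcd(m,n) = 1 and σ : x ↦ x^{q^m}. Let A = (a_{ij}) be any 3×3 matrix over F and let Γ = {[x] ∈ PG(2,q^n) : Σ_{i,j} a_{ij} x_i x_j^{q^m} = 0} be the associated σ-conic. Then every line ℓ of PG(2,q^n) either is contained in Γ or satisfies |ℓ ∩ Γ| ∈ {0, 1, 2, q+1}. -/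
open scoped LinearAlgebra.Projectivization

/-- The line of PG(2,F) determined by a 2-dimensional subspace `W` of `F³`: the set of
projective points whose representative vectors lie in `W`. -/
def projLine (F : Type*) [Field F] (W : Submodule F (Fin 3 → F)) :
    Set (ℙ F (Fin 3 → F)) :=
  {P : ℙ F (Fin 3 → F) | P.rep ∈ W}

/-- The σ-sesquilinear form Xᵀ A Y^σ on F³ associated with a 3×3 matrix A and
σ : x ↦ x^(q^m). -/
def sForm {F : Type*} [Field F] (q m : ℕ) (A : Matrix (Fin 3) (Fin 3) F)
    (x y : Fin 3 → F) : F :=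
  ∑ i : Fin 3, ∑ j : Fin 3, A i j * x i * (y j) ^ (q ^ m)

/-!
On a line `ℙ(W)` the σ-conic is the set of isotropic points of a σ-sesquilinear form `B` on the
2-dimensional space `W`. If it has three distinct points, rescale representatives to a basis
`u₀, u₁` of `W` with `[u₀]`, `[u₁]`, `[u₀ + u₁]` isotropic; then
`B (a u₀ + b u₁) (a u₀ + b u₁) = B u₀ u₁ * (a σ(b) - b σ(a))`. So either `B` vanishes on the whole
line, or the intersection is the subline `{[a : b] : a σ(b) = b σ(a)}`, which has `|Fix σ| + 1`
points. For `σ = x ↦ x ^ q ^ m` on `𝔽_{q^n}` with `gcd(m, n) = 1`, `Fix σ = 𝔽_q`.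
-/

open Module

namespace LinearMap

variable {F V : Type*} [Field F] [AddCommGroup V] [Module F V] {σ : F →+* F}

lemma apply_smul_smul_self (B : V →ₗ[F] V →ₛₗ[σ] F) (a : F) (v : V) :
    B (a • v) (a • v) = a * σ a * B v v := by
  rw [map_smulₛₗ₂, map_smulₛₗ, RingHom.id_apply, smul_eq_mul, smul_eq_mul]
  ring

lemma apply_smul_add_smul_self (B : V →ₗ[F] V →ₛₗ[σ] F) {u₀ u₁ : V} (h₀ : B u₀ u₀ = 0)
    (h₁ : B u₁ u₁ = 0) (h₀₁ : B (u₀ + u₁) (u₀ + u₁) = 0) (a b : F) :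
    B (a • u₀ + b • u₁) (a • u₀ + b • u₁) = B u₀ u₁ * (a * σ b - b * σ a) := by
  simp only [map_add, add_apply, map_smul, smul_apply, map_smulₛₗ, smul_eq_mul] at h₀₁ ⊢
  linear_combination (a * σ a - b * σ a) * h₀ + (b * σ b - b * σ a) * h₁ + b * σ a * h₀₁

end LinearMap

namespace Projectivization

variable {F V V' : Type*} [Field F] [AddCommGroup V] [Module F V] [AddCommGroup V']
  [Module F V'] {σ : F →+* F}

def isotropicPoints (B : V →ₗ[F] V →ₛₗ[σ] F) : Set (ℙ F V) := {P | B P.rep P.rep = 0}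

lemma mk_mem_isotropicPoints (B : V →ₗ[F] V →ₛₗ[σ] F) {v : V} (hv : v ≠ 0) :
    mk F v hv ∈ isotropicPoints B ↔ B v v = 0 := by
  obtain ⟨a, ha⟩ := exists_smul_eq_mk_rep F v hv
  rw [isotropicPoints, Set.mem_ofPred_eq, ← ha, Units.smul_def, B.apply_smul_smul_self]
  simp

lemma eq_of_smul_rep_eq {P Q : ℙ F V} {a : F} (h : a • P.rep = Q.rep) : P = Q := by
  rw [← P.mk_rep, ← Q.mk_rep]
  exact ((mk_eq_mk_iff' F _ _ _ _).mpr ⟨a, h⟩).symm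

lemma range_map {e : V' →ₗ[F] V} (he : Function.Injective e) :
    Set.range (map e he) = {P | P.rep ∈ LinearMap.range e} := by
  ext P
  constructor
  · rintro ⟨Q, rfl⟩
    induction Q using Projectivization.ind with
    | h v hv =>
      obtain ⟨a, ha⟩ := exists_smul_eq_mk_rep F (e v) ((map_ne_zero_iff e he).mpr hv)
      rw [map_mk, Set.mem_ofPred_eq, ← ha]
      exact Submodule.smul_mem _ _ (LinearMap.mem_range_self e v)
  · rintro ⟨v, hv⟩
    have hv₀ : v ≠ 0 := by rintro rfl; exact P.rep_nonzero (by simpa using hv.symm)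
    refine ⟨mk F v hv₀, ?_⟩
    rw [map_mk]
    conv_rhs => rw [← P.mk_rep]
    exact (mk_eq_mk_iff' F _ _ _ _).mpr ⟨1, by rw [one_smul, hv]⟩

lemma map_preimage_isotropicPoints (B : V →ₗ[F] V →ₛₗ[σ] F) {e : V' →ₗ[F] V}
    (he : Function.Injective e) :
    map e he ⁻¹' isotropicPoints B = isotropicPoints ((B.comp e).compl₂ e) := by
  ext P
  induction P using Projectivization.ind with
  | h v hv =>
    rw [Set.mem_preimage, map_mk, mk_mem_isotropicPoints, mk_mem_isotropicPoints,
      LinearMap.compl₂_apply, LinearMap.comp_apply]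

variable (σ) in
/-- Its isotropic points are the `[z]` with `[σ z] = [z]`, a copy of `PG(1, Fix σ)`. -/
def sublineForm : (Fin 2 → F) →ₗ[F] (Fin 2 → F) →ₛₗ[σ] F :=
  Matrix.toLinearMapₛₗ₂' F (RingHom.id F) σ !![0, 1; -1, 0]

lemma sublineForm_apply (z w : Fin 2 → F) :
    sublineForm σ z w = z 0 * σ (w 1) - z 1 * σ (w 0) := by
  simp only [sublineForm, Matrix.toLinearMapₛₗ₂'_apply, RingHom.id_apply, Matrix.of_apply,
    Matrix.cons_val', Matrix.cons_val_fin_one, smul_eq_mul, Fin.sum_univ_two, Matrix.cons_val_zero,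
    Matrix.cons_val_one, mul_zero, mul_one, zero_add, mul_neg, add_zero]
  ring

lemma isotropicPoints_sublineForm :
    isotropicPoints (sublineForm σ) = insert (mk F ![0, 1] (by simp))
      ((fun c => mk F ![1, c] (by simp)) '' Function.fixedPoints σ) := by
  ext P
  induction P using Projectivization.ind with
  | h v hv =>
  rw [mk_mem_isotropicPoints, sublineForm_apply, sub_eq_zero]
  constructor
  · intro h
    by_cases hv₀ : v 0 = 0
    · refine Or.inl ((mk_eq_mk_iff' F _ _ _ _).mpr ⟨v 1, ?_⟩)
      ext i; fin_cases i <;> simp [hv₀]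
    · refine Or.inr ⟨v 1 / v 0, ?_, ((mk_eq_mk_iff' F _ _ _ _).mpr ⟨v 0, ?_⟩).symm⟩
      · have : σ (v 0) ≠ 0 := by simpa using hv₀
        rw [Function.mem_fixedPoints, Function.IsFixedPt, map_div₀, div_eq_div_iff this hv₀]
        linear_combination h
      · ext i; fin_cases i <;> simp [mul_div_cancel₀, hv₀]
  · rintro (h | ⟨c, hc, h⟩)
    · obtain ⟨a, rfl⟩ := (mk_eq_mk_iff' F _ _ _ _).mp h
      simp
    · obtain ⟨a, rfl⟩ := (mk_eq_mk_iff' F _ _ _ _).mp h.symm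
      simp only [Pi.smul_apply, Matrix.cons_val_zero, Matrix.cons_val_one, Matrix.cons_val_fin_one,
        smul_eq_mul, mul_one, map_mul, hc.eq]
      ring

lemma ncard_isotropicPoints_sublineForm [Finite F] :
    (isotropicPoints (sublineForm σ)).ncard = (Function.fixedPoints σ).ncard + 1 := by
  have hinj : Function.Injective fun c : F => mk F ![1, c] (by simp) := by
    intro c c' h
    obtain ⟨a, ha⟩ := (mk_eq_mk_iff' F _ _ _ _).mp h
    have h₀ := congrFun ha 0
    have h₁ := congrFun ha 1
    simp only [Pi.smul_apply, Matrix.cons_val_zero, Matrix.cons_val_one, smul_eq_mul,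
      mul_one] at h₀ h₁
    rw [← h₁, h₀, one_mul]
  have hnotMem : mk F ![0, 1] (by simp) ∉
      (fun c => mk F ![1, c] (by simp)) '' Function.fixedPoints σ := by
    rintro ⟨c, -, h⟩
    obtain ⟨a, ha⟩ := (mk_eq_mk_iff' F _ _ _ _).mp h
    simpa using congrFun ha 0
  rw [isotropicPoints_sublineForm, Set.ncard_insert_of_notMem hnotMem (Set.toFinite _),
    Set.ncard_image_of_injective _ hinj]

lemma exists_basis_of_three_ne {W : Submodule F V} (hW : finrank F W = 2) {P₀ P₁ P₂ : ℙ F V}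
    (h₀ : P₀.rep ∈ W) (h₁ : P₁.rep ∈ W) (h₂ : P₂.rep ∈ W)
    (h₀₁ : P₀ ≠ P₁) (h₀₂ : P₀ ≠ P₂) (h₁₂ : P₁ ≠ P₂) :
    ∃ (b : Basis (Fin 2) F W) (a₀ a₁ : F),
      (b 0 : V) = a₀ • P₀.rep ∧ (b 1 : V) = a₁ • P₁.rep ∧ (b 0 + b 1 : V) = P₂.rep := by
  let v : Fin 2 → W := ![⟨_, h₀⟩, ⟨_, h₁⟩]
  have hv : LinearIndependent F v := by
    refine LinearIndependent.of_comp W.subtype ?_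
    convert (independent_iff.mp ((independent_pair_iff_ne P₀ P₁).mpr h₀₁)) using 1
    ext i; fin_cases i <;> rfl
  let b₀ := basisOfLinearIndependentOfCardEqFinrank hv (by simp [hW])
  have hsum := congrArg Subtype.val (b₀.sum_equivFun ⟨P₂.rep, h₂⟩)
  simp only [Fin.sum_univ_two, b₀, coe_basisOfLinearIndependentOfCardEqFinrank, v,
    Submodule.coe_add, Submodule.coe_smul, Matrix.cons_val_zero, Matrix.cons_val_one] at hsum
  set c := b₀.equivFun ⟨P₂.rep, h₂⟩
  have hc₀ : c 0 ≠ 0 := fun h => h₁₂ (eq_of_smul_rep_eq (a := c 1) (by simpa [h] using hsum))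
  have hc₁ : c 1 ≠ 0 := fun h => h₀₂ (eq_of_smul_rep_eq (a := c 0) (by simpa [h] using hsum))
  refine ⟨b₀.unitsSMul fun i => Units.mk0 (c i) (by fin_cases i <;> assumption), c 0, c 1, ?_⟩
  simp [Basis.unitsSMul_apply, b₀, v, hsum]

theorem line_subset_or_ncard_inter_isotropicPoints [Finite F] (B : V →ₗ[F] V →ₛₗ[σ] F)
    {W : Submodule F V} (hW : finrank F W = 2) :
    {P : ℙ F V | P.rep ∈ W} ⊆ isotropicPoints B ∨
      ({P : ℙ F V | P.rep ∈ W} ∩ isotropicPoints B).ncard ∈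
        ({0, 1, 2, (Function.fixedPoints σ).ncard + 1} : Set ℕ) := by
  set L := {P : ℙ F V | P.rep ∈ W}
  by_cases hle : (L ∩ isotropicPoints B).ncard ≤ 2
  · right; simp only [Set.mem_insert_iff, Set.mem_singleton_iff]; omega
  have hfin : (L ∩ isotropicPoints B).Finite := Set.finite_of_ncard_pos (by omega)
  obtain ⟨P₀, ⟨hP₀, hB₀⟩, P₁, ⟨hP₁, hB₁⟩, P₂, ⟨hP₂, hB₂⟩, h₀₁, h₀₂, h₁₂⟩ :=
    (Set.two_lt_ncard hfin).mp (by omega)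
  obtain ⟨b, a₀, a₁, hb₀, hb₁, hb₂⟩ := exists_basis_of_three_ne hW hP₀ hP₁ hP₂ h₀₁ h₀₂ h₁₂
  let e : (Fin 2 → F) →ₗ[F] V := W.subtype ∘ₗ b.equivFun.symm.toLinearMap
  have he : Function.Injective e := W.injective_subtype.comp b.equivFun.symm.injective
  have hrange : LinearMap.range e = W := by
    rw [LinearMap.range_comp, LinearEquiv.range, Submodule.map_top, Submodule.range_subtype]
  have hform : ∀ z, (B.comp e).compl₂ e z z = B (b 0) (b 1) * sublineForm σ z z := by
    intro z
    simp only [LinearMap.compl₂_apply, LinearMap.comp_apply, e, LinearEquiv.coe_coe,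
      Basis.equivFun_symm_apply, Fin.sum_univ_two, Submodule.subtype_apply, Submodule.coe_add,
      Submodule.coe_smul, sublineForm_apply]
    refine B.apply_smul_add_smul_self ?_ ?_ ?_ _ _
    · rw [hb₀, B.apply_smul_smul_self, hB₀, mul_zero]
    · rw [hb₁, B.apply_smul_smul_self, hB₁, mul_zero]
    · rw [hb₂]; exact hB₂
  have himage : L ∩ isotropicPoints B = map e he '' isotropicPoints ((B.comp e).compl₂ e) := by
    rw [← map_preimage_isotropicPoints B he, Set.image_preimage_eq_range_inter, range_map,
      hrange]
  by_cases hc : B (b 0) (b 1) = 0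
  · left
    have huniv : isotropicPoints ((B.comp e).compl₂ e) = Set.univ :=
      Set.eq_univ_of_forall fun P => by simp [isotropicPoints, hform, hc]
    rw [← Set.inter_eq_left, himage, huniv, Set.image_univ, range_map, hrange]
  · right
    have hsubline : isotropicPoints ((B.comp e).compl₂ e) = isotropicPoints (sublineForm σ) := by
      ext P
      induction P using Projectivization.ind with
      | h v hv => simp [mk_mem_isotropicPoints, hform, hc]
    rw [himage, Set.ncard_image_of_injective _ (map_injective e he), hsubline,
      ncard_isotropicPoints_sublineForm]
    simp

end Projectivization

open Projectivization

lemma pow_pow_eq_self_iff_of_coprime {M : Type*} [Monoid M] {x : M} {q m n : ℕ}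
    (hx : x ^ q ^ n = x) (hmn : m.Coprime n) : x ^ q ^ m = x ↔ x ^ q = x := by
  have hper : ∀ j, Function.IsPeriodicPt (· ^ q) j x ↔ x ^ q ^ j = x := fun j => by
    rw [Function.IsPeriodicPt, Function.IsFixedPt, pow_iterate]
  refine ⟨fun h => ?_, fun h => ?_⟩
  · simpa [hper, hmn.gcd_eq_one] using ((hper m).mpr h).gcd ((hper n).mpr hx)
  · simpa [hper] using ((hper 1).mpr (by simpa using h)).mul_const m

open Polynomial in
lemma ncard_setOf_pow_eq_self {F : Type*} [Field F] [Fintype F] {p q n : ℕ} [CharP F p]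
    (hpq : p ∣ q) (hq : 1 < q) (hF : Fintype.card F = q ^ n) :
    {x : F | x ^ q = x}.ncard = q := by
  have hX : ∀ r : ℕ, 1 ≤ r → (X ^ r - X : F[X]) = X * (X ^ (r - 1) - 1) := fun r hr => by
    rw [mul_sub, mul_one, ← pow_succ', Nat.sub_add_cancel hr]
  have hdvd : (X ^ q - X : F[X]) ∣ X ^ Nat.card F - X := by
    rw [Nat.card_eq_fintype_card, hF, hX q hq.le, hX (q ^ n) (Nat.one_le_pow _ _ (by omega))]
    obtain ⟨s, hs⟩ := Nat.sub_one_dvd_pow_sub_one q n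
    rw [hs, pow_mul]
    simpa using mul_dvd_mul_left X (sub_dvd_pow_sub_pow (X ^ (q - 1) : F[X]) 1 s)
  have hsplit : (X ^ q - X : F[X]).Splits := splits_X_pow_nat_card_sub_X.of_dvd
    (FiniteField.X_pow_card_sub_X_ne_zero F Finite.one_lt_card) hdvd
  have hcard := card_rootSet_eq_natDegree (K := F) (galois_poly_separable (K := F) p q hpq)
    (by simpa using hsplit)
  rw [FiniteField.X_pow_card_sub_X_natDegree_eq F hq, ← Nat.card_eq_fintype_card] at hcard
  rw [← Nat.card_coe_set_eq]
  convert hcard using 3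
  ext x
  simp [mem_rootSet, FiniteField.X_pow_card_sub_X_ne_zero F hq, sub_eq_zero]

lemma sForm_eq_toLinearMapₛₗ₂' {F : Type*} [Field F] {q m : ℕ} {σ : F →+* F}
    (hσ : ∀ x, σ x = x ^ q ^ m) (A : Matrix (Fin 3) (Fin 3) F) (x y : Fin 3 → F) :
    sForm q m A x y = Matrix.toLinearMapₛₗ₂' F (RingHom.id F) σ A x y := by
  simp only [sForm, Matrix.toLinearMapₛₗ₂'_apply, hσ, RingHom.id_apply, smul_eq_mul]
  exact Finset.sum_congr rfl fun _ _ => Finset.sum_congr rfl fun _ _ => by ring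

theorem line_meets_sigma_conic_general
    (q n m : ℕ) (hq : IsPrimePow q)
    (hmn : Nat.gcd m n = 1)
    (F : Type*) [Field F] [Fintype F] (hF : Fintype.card F = q ^ n)
    (A : Matrix (Fin 3) (Fin 3) F)
    (Γ : Set (ℙ F (Fin 3 → F)))
    (hΓ : Γ = {P : ℙ F (Fin 3 → F) | sForm q m A P.rep P.rep = 0})
    (W : Submodule F (Fin 3 → F)) (hW : Module.finrank F ↥W = 2) :
    projLine F W ⊆ Γ ∨ (projLine F W ∩ Γ).ncard ∈ ({0, 1, 2, q + 1} : Set ℕ) := by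
  obtain ⟨p, k, hp, hk, rfl⟩ := hq
  have := Fact.mk (Nat.prime_iff.mpr hp)
  have : CharP F p := charP_of_card_eq_prime_pow (f := k * n) (by rw [hF, pow_mul])
  let σ := iterateFrobenius F p (k * m)
  have hσ : ∀ x, σ x = x ^ (p ^ k) ^ m := fun x => by rw [iterateFrobenius_def, pow_mul]
  have hfix : Function.fixedPoints σ = {x : F | x ^ p ^ k = x} := Set.ext fun x => by
    rw [Function.mem_fixedPoints, Function.IsFixedPt, hσ]
    exact pow_pow_eq_self_iff_of_coprime (by rw [← hF, FiniteField.pow_card]) hmn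
  have hΓB : Γ = isotropicPoints (Matrix.toLinearMapₛₗ₂' F (RingHom.id F) σ A) := by
    simp only [hΓ, isotropicPoints, sForm_eq_toLinearMapₛₗ₂' hσ]
  rw [hΓB, ← ncard_setOf_pow_eq_self (dvd_pow_self p hk.ne')
    (Nat.one_lt_pow hk.ne' (Nat.prime_iff.mpr hp).one_lt) hF, ← hfix]
  exact line_subset_or_ncard_inter_isotropicPoints _ hW

/-- Every line of PG(2,qⁿ) either is contained in the σ-conic Γ associated
with a 3×3 matrix A, or meets it in 0, 1, 2 or q+1 points. -/
theorem line_meets_sigma_conic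
    (q n m : ℕ) (hq : IsPrimePow q) (hn : 1 ≤ n) (hm : 0 < m)
    (hmn : Nat.gcd m n = 1)
    (F : Type*) [Field F] [Fintype F] (hF : Fintype.card F = q ^ n)
    (A : Matrix (Fin 3) (Fin 3) F)
    (Γ : Set (ℙ F (Fin 3 → F)))
    (hΓ : Γ = {P : ℙ F (Fin 3 → F) | sForm q m A P.rep P.rep = 0})
    (W : Submodule F (Fin 3 → F)) (hW : Module.finrank F ↥W = 2) :
    projLine F W ⊆ Γ ∨ (projLine F W ∩ Γ).ncard ∈ ({0, 1, 2, q + 1} : Set ℕ) :=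
  line_meets_sigma_conic_general q n m hq hmn F hF A Γ hΓ W hW
end

section
/- Let q be a prime power, n ≥ 1, F = 𝔽_{q^n}, and let m be a positive integer with gcd(m,n) = 1. Then the C_F^m-set Γ = {[x] ∈ PG(2,q^n) : x₁x₃^{q^m} = x₂^{q^m+1}} is a set of type (0,1,2,q+1) with respect to lines: for every line ℓ of PG(2,q^n), |ℓ ∩ Γ| ∈ {0, 1, 2, q+1}. -/
open scoped LinearAlgebra.Projectivization

/-!
Write `Q = q^m`. Every line is the kernel of a nonzero functional `w`, and `Γ` consists of the
vertex `[1,0,0]` together with the points `[t^(Q+1), t, 1]`, `t ∈ F`. A line through the vertex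
meets the other points of `Γ` in at most one point. Any other line meets `Γ` in the points
given by the roots of `a t^(Q+1) + b t + c` with `a ≠ 0`. If `t₀` is one root, substituting
`t = t₀ + 1/u` turns the equation into `d u^Q + a t₀ u + a = 0`, affine for the additive map
`u ↦ u^Q`. Its solution set is empty, a point, or a coset of the kernel `{u | u^Q = e u}`, which
is a multiplicative translate of `{y | y^Q = y}`. Because
`gcd(q^n - 1, q^m - 1) = q^gcd(m,n) - 1 = q - 1`, this fixed set is `𝔽_q`, so there are
0, 1, 2 or `q + 1` roots.
-/

theorem ncard_setOf_pow_eq_one {K : Type*} [Field K] [Finite K] {d : ℕ} (hd : d ≠ 0) :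
    {y : K | y ^ d = 1}.ncard = (Nat.card K - 1).gcd d := by
  have himage :
      {y : K | y ^ d = 1} = Units.val '' ((powMonoidHom d : Kˣ →* Kˣ).ker : Set Kˣ) := by
    ext y
    constructor
    · intro hy
      have hy0 : y ≠ 0 := by rintro rfl; simp [zero_pow hd] at hy
      exact ⟨Units.mk0 y hy0, by simpa [Units.ext_iff] using hy, rfl⟩
    · rintro ⟨u, hu, rfl⟩
      simpa [Units.ext_iff] using hu
  rw [himage, Set.ncard_image_of_injective _ Units.val_injective, ← Nat.card_coe_set_eq,
    SetLike.coe_sort_coe, IsCyclic.card_powMonoidHom_ker, Nat.card_units]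

theorem ncard_setOf_pow_eq_self_s6 {K : Type*} [Field K] [Finite K] {Q : ℕ} (hQ : 1 < Q) :
    {y : K | y ^ Q = y}.ncard = (Nat.card K - 1).gcd (Q - 1) + 1 := by
  have hsplit : {y : K | y ^ Q = y} = insert 0 {y | y ^ (Q - 1) = 1} := by
    ext y
    rcases eq_or_ne y 0 with rfl | hy
    · simp [zero_pow (by omega : Q ≠ 0)]
    · have hQ' : y ^ Q = y ^ (Q - 1) * y := by rw [← pow_succ, Nat.sub_add_cancel hQ.le]
      simp [hy, hQ', mul_eq_right₀ hy]
  rw [hsplit, Set.ncard_insert_of_notMem (by simp [zero_pow (by omega : Q - 1 ≠ 0)]),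
    ncard_setOf_pow_eq_one (by omega)]

theorem ncard_setOf_pow_eq_mul_mem {K : Type*} [Field K] {Q : ℕ} (hQ : Q ≠ 0) (w : K) :
    {u : K | u ^ Q = w * u}.ncard ∈ ({1, {y : K | y ^ Q = y}.ncard} : Set ℕ) := by
  by_cases h : ∃ u₁ ≠ 0, u₁ ^ Q = w * u₁
  · obtain ⟨u₁, hu₁, hwu₁⟩ := h
    have hscale : ∀ y, (u₁ * y) ^ Q = w * (u₁ * y) ↔ y ^ Q = y := fun y => by
      have : w * u₁ ≠ 0 := hwu₁ ▸ pow_ne_zero Q hu₁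
      rw [mul_pow, hwu₁, ← mul_assoc, mul_right_inj' this]
    have himage : {u : K | u ^ Q = w * u} = (u₁ * ·) '' {y | y ^ Q = y} := by
      ext u
      refine ⟨fun hu => ⟨u₁⁻¹ * u, ?_, mul_inv_cancel_left₀ hu₁ u⟩, ?_⟩
      · rwa [Set.mem_ofPred_eq, ← hscale, mul_inv_cancel_left₀ hu₁]
      · rintro ⟨y, hy, rfl⟩
        exact (hscale y).2 hy
    right
    rw [himage, Set.ncard_image_of_injective _ (mul_right_injective₀ hu₁)]
    rfl
  · push Not at h
    have hzero : {u : K | u ^ Q = w * u} = {0} := by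
      ext u
      refine ⟨fun hu => by_contra fun hu0 => h u hu0 hu, ?_⟩
      rintro rfl
      simp [zero_pow hQ]
    left
    rw [hzero, Set.ncard_singleton]

theorem AddMonoidHom.ncard_setOf_apply_eq_mem {G H : Type*} [AddGroup G] [AddGroup H]
    (f : G →+ H) (c : H) :
    {x | f x = c}.ncard ∈ ({0, {x | f x = 0}.ncard} : Set ℕ) := by
  rcases Set.eq_empty_or_nonempty {x | f x = c} with h | ⟨x₀, hx₀⟩
  · left; rw [h, Set.ncard_empty]
  · right
    have htranslate : {x | f x = c} = (· + x₀) '' {x | f x = 0} := by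
      ext x
      refine ⟨fun hx => ⟨x - x₀, ?_, sub_add_cancel x x₀⟩, ?_⟩
      · simp_all [map_sub]
      · rintro ⟨y, hy, rfl⟩
        simp_all
    rw [htranslate, Set.ncard_image_of_injective _ (add_left_injective x₀)]
    rfl

theorem ncard_setOf_mul_add_eq_zero_le_one {K : Type*} [Field K] {a b : K}
    (h : a ≠ 0 ∨ b ≠ 0) :
    {t : K | a * t + b = 0}.ncard ≤ 1 := by
  have hsub : {t : K | a * t + b = 0}.Subsingleton := by
    intro s hs t ht
    rcases eq_or_ne a 0 with rfl | ha
    · simp_all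
    · exact mul_left_cancel₀ ha (by simp_all [← eq_neg_iff_add_eq_zero])
  exact (Set.ncard_le_one hsub.finite).2 fun s hs t ht => hsub hs ht

section FrobeniusAdditive

variable {K : Type*} [Field K] {Q : ℕ} (hQ : Q ≠ 0)
  (hadd : ∀ x y : K, (x + y) ^ Q = x ^ Q + y ^ Q)
include hQ hadd

theorem ncard_setOf_mul_pow_add_mul_add_mem {a : K} (ha : a ≠ 0) (d e : K) :
    {u : K | d * u ^ Q + e * u + a = 0}.ncard ∈
      ({0, 1, {y : K | y ^ Q = y}.ncard} : Set ℕ) := by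
  rcases eq_or_ne d 0 with rfl | hd
  · have hle := ncard_setOf_mul_add_eq_zero_le_one (Or.inr ha : e ≠ 0 ∨ a ≠ 0)
    simp only [zero_mul, zero_add, Set.mem_insert_iff, Set.mem_singleton_iff]
    omega
  · let L : K →+ K := AddMonoidHom.mk' (fun u => u ^ Q + (e / d) * u) fun x y => by
      simp only [hadd]; ring
    have hfiber : {u : K | d * u ^ Q + e * u + a = 0} = {u | L u = -(a / d)} := by
      ext u
      simp only [Set.mem_ofPred_eq, L, AddMonoidHom.mk'_apply]
      field_simp
      constructor <;> intro h <;> linear_combination h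
    have hker : {u : K | L u = 0} = {u | u ^ Q = -(e / d) * u} := by
      ext u
      simp only [Set.mem_ofPred_eq, L, AddMonoidHom.mk'_apply]
      constructor <;> intro h <;> linear_combination h
    have h1 := L.ncard_setOf_apply_eq_mem (-(a / d))
    have h2 := ncard_setOf_pow_eq_mul_mem hQ (-(e / d))
    rw [← hker] at h2
    rw [hfiber]
    simp only [Set.mem_insert_iff, Set.mem_singleton_iff] at h1 h2 ⊢
    omega

theorem ncard_setOf_mul_pow_succ_add_mem [Finite K] {a : K} (ha : a ≠ 0) (b c : K) :
    {t : K | a * t ^ (Q + 1) + b * t + c = 0}.ncard ∈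
      ({0, 1, 2, {y : K | y ^ Q = y}.ncard + 1} : Set ℕ) := by
  obtain h | ⟨t₀, ht₀⟩ :=
    Set.eq_empty_or_nonempty {t : K | a * t ^ (Q + 1) + b * t + c = 0}
  · simp [h]
  set d := a * t₀ ^ Q + b
  have key : ∀ u ≠ (0 : K), a * (t₀ + u⁻¹) ^ (Q + 1) + b * (t₀ + u⁻¹) + c = 0 ↔
      d * u ^ Q + a * t₀ * u + a = 0 := by
    intro u hu
    have hinv : u⁻¹ * u = 1 := inv_mul_cancel₀ hu
    have hinvQ : u⁻¹ ^ Q * u ^ Q = 1 := by rw [← mul_pow, hinv, one_pow]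
    have hexp : (a * (t₀ + u⁻¹) ^ (Q + 1) + b * (t₀ + u⁻¹) + c) * u ^ (Q + 1) =
        d * u ^ Q + a * t₀ * u + a := by
      rw [pow_succ, hadd]
      have ht₀' : a * t₀ ^ (Q + 1) + b * t₀ + c = 0 := ht₀
      linear_combination (u ^ Q * u) * ht₀' + (a * t₀ * u + a) * hinvQ +
        (a * t₀ ^ Q * u ^ Q + a * u ^ Q * u⁻¹ ^ Q + b * u ^ Q) * hinv
    rw [← hexp, mul_eq_zero_iff_right (pow_ne_zero _ hu)]
  set T := {u : K | d * u ^ Q + a * t₀ * u + a = 0}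
  have hT0 : (0 : K) ∉ T := by simp [T, zero_pow hQ, ha]
  have hdecomp : {t : K | a * t ^ (Q + 1) + b * t + c = 0} =
      insert t₀ ((fun u => t₀ + u⁻¹) '' T) := by
    ext t
    rcases eq_or_ne t t₀ with rfl | ht
    · simpa using ht₀
    constructor
    · intro h
      refine Or.inr ⟨(t - t₀)⁻¹, (key _ (inv_ne_zero (sub_ne_zero.2 ht))).1 ?_, by simp⟩
      simpa using h
    · rintro (h | ⟨u, hu, rfl⟩)
      · exact absurd h ht
      · exact (key u (ne_of_mem_of_not_mem hu hT0)).2 hu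
  have ht₀_notMem : t₀ ∉ (fun u => t₀ + u⁻¹) '' T := by
    rintro ⟨u, hu, h⟩
    have hu0 : u = 0 := by simpa using h
    exact hT0 (hu0 ▸ hu)
  rw [hdecomp, Set.ncard_insert_of_notMem ht₀_notMem,
    Set.ncard_image_of_injective _ fun u v h => inv_injective (add_left_cancel h)]
  have hT : T.ncard ∈ _ := ncard_setOf_mul_pow_add_mul_add_mem hQ hadd ha d (a * t₀)
  simp only [Set.mem_insert_iff, Set.mem_singleton_iff] at hT ⊢
  omega

end FrobeniusAdditive

theorem Submodule.exists_dotProduct_eq_zero_iff {K ι : Type*} [Field K] [Fintype ι]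
    (W : Submodule K (ι → K)) (hW : Module.finrank K W + 1 = Fintype.card ι) :
    ∃ w : ι → K, w ≠ 0 ∧ ∀ v, v ∈ W ↔ w ⬝ᵥ v = 0 := by
  classical
  have hquot : Module.finrank K ((ι → K) ⧸ W) = Module.finrank K K := by
    have := W.finrank_quotient_add_finrank
    rw [Module.finrank_fintype_fun_eq_card] at this
    rw [Module.finrank_self]
    omega
  obtain ⟨e⟩ := FiniteDimensional.nonempty_linearEquiv_of_finrank_eq hquot
  let φ : (ι → K) →ₗ[K] K := e.toLinearMap.comp W.mkQ
  have hφ : ∀ v, φ v = (fun i => φ (Pi.single i 1)) ⬝ᵥ v := fun v => by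
    rw [φ.pi_apply_eq_sum_univ, dotProduct]
    refine Finset.sum_congr rfl fun i _ => ?_
    rw [smul_eq_mul, mul_comm]
    congr 2
    ext j
    simp [Pi.single_apply, eq_comm]
  refine ⟨fun i => φ (Pi.single i 1), fun hw => ?_, fun v => ?_⟩
  · obtain ⟨v, hv⟩ := W.mkQ_surjective (e.symm 1)
    have : φ v = 1 := by simp [φ, hv]
    simp [hφ v, hw] at this
  · rw [← hφ, ← W.ker_mkQ, LinearMap.mem_ker, LinearMap.comp_apply]
    exact e.map_eq_zero_iff.symm

theorem Projectivization.rep_mk_mem_iff {K V : Type*} [DivisionRing K] [AddCommGroup V]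
    [Module K V] {S : Set V} (hS : ∀ (c : Kˣ) (v : V), c • v ∈ S ↔ v ∈ S) {v : V}
    (hv : v ≠ 0) :
    (mk K v hv).rep ∈ S ↔ v ∈ S := by
  obtain ⟨c, hc⟩ := exists_smul_eq_mk_rep K v hv
  rw [← hc, hS]

theorem mk_mem_projLine_iff {F : Type*} [Field F] {W : Submodule F (Fin 3 → F)}
    {v : Fin 3 → F} (hv : v ≠ 0) : Projectivization.mk F v hv ∈ projLine F W ↔ v ∈ W :=
  Projectivization.rep_mk_mem_iff (fun c _ => W.smul_mem_iff' c) hv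

section CFmSet

variable (F : Type*) [Field F]

def cfmCone (Q : ℕ) : Set (Fin 3 → F) := {v | v 0 * v 2 ^ Q = v 1 ^ (Q + 1)}

def cfmVertex : ℙ F (Fin 3 → F) := Projectivization.mk F ![1, 0, 0] (by simp)

def cfmPoint (Q : ℕ) (t : F) : ℙ F (Fin 3 → F) :=
  Projectivization.mk F ![t ^ (Q + 1), t, 1] (by simp)

variable {F} {Q : ℕ}

theorem smul_mem_cfmCone_iff (c : Fˣ) (v : Fin 3 → F) :
    c • v ∈ cfmCone F Q ↔ v ∈ cfmCone F Q := by
  have hc : (c : F) ^ (Q + 1) ≠ 0 := pow_ne_zero _ c.ne_zero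
  simp only [cfmCone, Set.mem_ofPred_eq, Pi.smul_apply, Units.smul_def, smul_eq_mul, mul_pow]
  rw [show (c : F) * v 0 * ((c : F) ^ Q * v 2 ^ Q) = (c : F) ^ (Q + 1) * (v 0 * v 2 ^ Q) by ring,
    mul_right_inj' hc]

theorem setOf_rep_mem_cfmCone (hQ : Q ≠ 0) :
    {P : ℙ F (Fin 3 → F) | P.rep ∈ cfmCone F Q} =
      insert (cfmVertex F) (Set.range (cfmPoint F Q)) := by
  ext P
  induction P using Projectivization.ind with
  | h v hv =>
  rw [Set.mem_ofPred_eq, Projectivization.rep_mk_mem_iff (fun c v => smul_mem_cfmCone_iff c v) hv]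
  simp only [Set.mem_insert_iff, Set.mem_range, cfmVertex, cfmPoint, Projectivization.mk_eq_mk_iff']
  constructor
  · intro h
    change v 0 * v 2 ^ Q = v 1 ^ (Q + 1) at h
    rcases eq_or_ne (v 2) 0 with h2 | h2
    · have h1 : v 1 = 0 :=
        (pow_eq_zero_iff Q.succ_ne_zero).1 (by rw [← h, h2, zero_pow hQ, mul_zero])
      refine Or.inl ⟨v 0, ?_⟩
      ext i
      fin_cases i <;> simp [h1, h2]
    · refine Or.inr ⟨v 1 / v 2, (v 2)⁻¹, ?_⟩
      ext i
      fin_cases i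
      · simp only [Pi.smul_apply, smul_eq_mul, Matrix.cons_val_zero, Fin.zero_eta]
        rw [div_pow, ← h, pow_succ]
        field_simp
      all_goals simp [h2, div_eq_inv_mul]
  · rintro (⟨c, rfl⟩ | ⟨t, c, hc⟩)
    · simp [cfmCone, zero_pow hQ]
    · have hc0 : c ≠ 0 := left_ne_zero_of_mul_eq_one (by simpa using congrFun hc 2)
      rw [← smul_mem_cfmCone_iff (Units.mk0 c hc0), Units.smul_mk0, hc]
      simp [cfmCone]

theorem cfmPoint_injective : Function.Injective (cfmPoint F Q) := by
  intro s t h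
  obtain ⟨c, hc⟩ := (Projectivization.mk_eq_mk_iff' _ _ _ _ _).1 h
  have h2 := congrFun hc 2
  have h1 := congrFun hc 1
  simp_all

theorem cfmVertex_notMem_range_cfmPoint : cfmVertex F ∉ Set.range (cfmPoint F Q) := by
  rintro ⟨t, h⟩
  obtain ⟨c, hc⟩ := (Projectivization.mk_eq_mk_iff' _ _ _ _ _).1 h
  have h2 := congrFun hc 2
  have h0 := congrFun hc 0
  simp_all

theorem ncard_projLine_inter_cfmCone [Finite F] [DecidableEq F] (hQ : Q ≠ 0)
    {W : Submodule F (Fin 3 → F)} {w : Fin 3 → F} (hW : ∀ v, v ∈ W ↔ w ⬝ᵥ v = 0) :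
    (projLine F W ∩ {P | P.rep ∈ cfmCone F Q}).ncard =
      (if w 0 = 0 then 1 else 0) + {t : F | w 0 * t ^ (Q + 1) + w 1 * t + w 2 = 0}.ncard := by
  have hvertex : cfmVertex F ∈ projLine F W ↔ w 0 = 0 := by
    simp [cfmVertex, mk_mem_projLine_iff, hW, dotProduct, Fin.sum_univ_three]
  have hpoints :
      cfmPoint F Q ⁻¹' projLine F W = {t | w 0 * t ^ (Q + 1) + w 1 * t + w 2 = 0} := by
    ext t
    simp [cfmPoint, mk_mem_projLine_iff, hW, dotProduct, Fin.sum_univ_three, mul_comm]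
  rw [setOf_rep_mem_cfmCone hQ]
  split_ifs with h0
  · have hnotMem : cfmVertex F ∉ cfmPoint F Q '' (cfmPoint F Q ⁻¹' projLine F W) :=
      fun h => cfmVertex_notMem_range_cfmPoint (Set.image_subset_range _ _ h)
    rw [Set.inter_insert_of_mem (hvertex.2 h0), ← Set.image_preimage_eq_inter_range,
      Set.ncard_insert_of_notMem hnotMem, Set.ncard_image_of_injective _ cfmPoint_injective,
      hpoints, add_comm]
  · rw [Set.inter_insert_of_notMem (mt hvertex.1 h0), ← Set.image_preimage_eq_inter_range,
      Set.ncard_image_of_injective _ cfmPoint_injective, hpoints, zero_add]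

theorem ncard_projLine_inter_cfmCone_mem [Finite F] (hQ : Q ≠ 0)
    (hadd : ∀ x y : F, (x + y) ^ Q = x ^ Q + y ^ Q) {W : Submodule F (Fin 3 → F)}
    (hW : Module.finrank F W = 2) :
    (projLine F W ∩ {P | P.rep ∈ cfmCone F Q}).ncard ∈
      ({0, 1, 2, {y : F | y ^ Q = y}.ncard + 1} : Set ℕ) := by
  classical
  obtain ⟨w, hw, hWw⟩ := W.exists_dotProduct_eq_zero_iff (by simp [hW])
  rw [ncard_projLine_inter_cfmCone hQ hWw]
  split_ifs with h0
  · have hw12 : w 1 ≠ 0 ∨ w 2 ≠ 0 := by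
      by_contra! h
      exact hw (funext fun i => by fin_cases i <;> simp [h0, h.1, h.2])
    have hle := ncard_setOf_mul_add_eq_zero_le_one hw12
    simp only [h0, zero_mul, zero_add, Set.mem_insert_iff, Set.mem_singleton_iff] at hle ⊢
    omega
  · simpa using ncard_setOf_mul_pow_succ_add_mem hQ hadd h0 (w 1) (w 2)

end CFmSet

theorem CFm_set_type_wrt_lines_general
    (q n m : ℕ) (hq : IsPrimePow q) (hm : 0 < m)
    (hmn : Nat.gcd m n = 1)
    (F : Type*) [Field F] [Fintype F] (hF : Fintype.card F = q ^ n)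
    (Γ : Set (ℙ F (Fin 3 → F)))
    (hΓ : Γ = {P : ℙ F (Fin 3 → F) |
      P.rep 0 * (P.rep 2) ^ (q ^ m) = (P.rep 1) ^ (q ^ m + 1)})
    (W : Submodule F (Fin 3 → F)) (hW : Module.finrank F ↥W = 2) :
    (projLine F W ∩ Γ).ncard ∈ ({0, 1, 2, q + 1} : Set ℕ) := by
  obtain ⟨p, k, hp, hk, hpk⟩ := hq
  replace hp := hp.nat_prime
  have : Fact p.Prime := ⟨hp⟩
  have : CharP F p := charP_of_card_eq_prime_pow (hF.trans (by rw [← hpk, ← pow_mul]))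
  have hq : 1 < q := hpk ▸ Nat.one_lt_pow hk.ne' hp.one_lt
  have hQ : 1 < q ^ m := Nat.one_lt_pow hm.ne' hq
  have hadd : ∀ x y : F, (x + y) ^ q ^ m = x ^ q ^ m + y ^ q ^ m := by
    rw [← hpk, ← pow_mul]
    exact fun x y => add_pow_char_pow x y p (k * m)
  have hfix : {y : F | y ^ q ^ m = y}.ncard = q := by
    rw [ncard_setOf_pow_eq_self_s6 hQ, Nat.card_eq_fintype_card, hF,
      Nat.pow_sub_one_gcd_pow_sub_one, Nat.gcd_comm, hmn, pow_one, Nat.sub_add_cancel hq.le]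
  have h := ncard_projLine_inter_cfmCone_mem hQ.ne_bot hadd hW
  rw [hfix] at h
  exact hΓ ▸ h

/-- The C_F^m-set Γ = {[x] ∈ PG(2,qⁿ) : x₁x₃^(q^m) = x₂^(q^m+1)} is a set
of type (0,1,2,q+1) with respect to lines. -/
theorem CFm_set_type_wrt_lines
    (q n m : ℕ) (hq : IsPrimePow q) (hn : 1 ≤ n) (hm : 0 < m)
    (hmn : Nat.gcd m n = 1)
    (F : Type*) [Field F] [Fintype F] (hF : Fintype.card F = q ^ n)
    (Γ : Set (ℙ F (Fin 3 → F)))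
    (hΓ : Γ = {P : ℙ F (Fin 3 → F) |
      P.rep 0 * (P.rep 2) ^ (q ^ m) = (P.rep 1) ^ (q ^ m + 1)})
    (W : Submodule F (Fin 3 → F)) (hW : Module.finrank F ↥W = 2) :
    (projLine F W ∩ Γ).ncard ∈ ({0, 1, 2, q + 1} : Set ℕ) :=
  CFm_set_type_wrt_lines_general q n m hq hm hmn F hF Γ hΓ W hW
end

section
/- Let q be a prime power, n ≥ 1, F = 𝔽_{q^n}, and let m be a positive integer with gcd(m,n) = 1. Then the degenerate C_F^m-set Γ = {[x] ∈ PG(2,q^n) : x₁x₃^{q^m} = x₂^{q^m}x₃} is a set of type (1,2,q+1,q^n+1) with respect to lines: for every line ℓ of PG(2,q^n), |ℓ ∩ Γ| ∈ {1, 2, q+1, q^n+1}. -/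
/-! The line `ℙ(W)` meets the line `x₃ = 0` in a point `[a]`, which lies on `Γ`. Completing `a` to a
basis `a, b` of `W`, the remaining points of the line are the `[t • a + b]`, `t ∈ F`, and
`[t • a + b] ∈ Γ` is an equation `A t^(q^m) + B t = C`. Either it holds for every `t` (then
`b₃ = 0` and the whole line lies on `Γ`), or `(A, B) ≠ 0`. In the latter case `t ↦ A t^(q^m) + B t`
is additive, so the solution set is empty or a translate of the kernel. If `t₁ ≠ 0` is in the
kernel, every other element is `t₁ z` with `z^(q^m) = z`; as also `z^(q^n) = z` and
`gcd(m, n) = 1`, this means `z^q = z`, so the kernel is `{0}` or `t₁ 𝔽_q`. Hence the line meets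
`Γ` in `1 + 0`, `1 + 1`, `1 + q` or `1 + q^n` points. -/

open scoped LinearAlgebra.Projectivization

open Function Submodule Module

section FiniteField

variable {F : Type*} [Field F] [Fintype F] {q n : ℕ}

theorem one_lt_and_ne_zero_of_card_eq_pow (hF : Fintype.card F = q ^ n) : 1 < q ∧ n ≠ 0 := by
  have h : 1 < q ^ n := hF ▸ Fintype.one_lt_card
  have hn : n ≠ 0 := by rintro rfl; simp at h
  exact ⟨(one_lt_pow_iff hn).mp h, hn⟩

theorem add_pow_pow_of_card_eq_pow (hq : IsPrimePow q) (hF : Fintype.card F = q ^ n) (j : ℕ)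
    (x y : F) : (x + y) ^ q ^ j = x ^ q ^ j + y ^ q ^ j := by
  obtain ⟨p, k, hp, -, rfl⟩ := hq
  have := Fact.mk (Nat.prime_iff.mpr hp)
  have : CharP F p := charP_of_card_eq_prime_pow (f := k * n) (by rw [hF, pow_mul])
  rw [← pow_mul]
  exact add_pow_char_pow ..

theorem pow_pow_eq_self_iff_of_coprime_s8 (hF : Fintype.card F = q ^ n) {m : ℕ}
    (hmn : m.Coprime n) (z : F) : z ^ q ^ m = z ↔ z ^ q = z := by
  have periodic (r : ℕ) : IsPeriodicPt (· ^ q) r z ↔ z ^ q ^ r = z := by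
    rw [IsPeriodicPt, IsFixedPt, pow_iterate]
  refine ⟨fun h => ?_, fun h => (periodic m).mp (IsFixedPt.isPeriodicPt h m)⟩
  have hn : IsPeriodicPt (· ^ q) n z := (periodic n).mpr (by rw [← hF, FiniteField.pow_card])
  simpa using (periodic 1).mp (by simpa [hmn] using ((periodic m).mpr h).gcd hn)

theorem ncard_setOf_pow_eq_self_s8 (hF : Fintype.card F = q ^ n) :
    {z : F | z ^ q = z}.ncard = q := by
  obtain ⟨hq, hn⟩ := one_lt_and_ne_zero_of_card_eq_pow hF
  obtain ⟨g, hg⟩ := IsCyclic.exists_ofOrder_eq_natCard (α := Fˣ)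
  rw [Nat.card_units, Nat.card_eq_fintype_card, hF] at hg
  have hqn : q ≤ q ^ n := Nat.le_self_pow hn q
  have hdvd : q - 1 ∣ q ^ n - 1 := by simpa using Nat.sub_dvd_pow_sub_pow q 1 n
  have hζ : IsPrimitiveRoot ((g : F) ^ ((q ^ n - 1) / (q - 1))) (q - 1) := by
    have := (IsPrimitiveRoot.coe_units_iff.mpr (hg ▸ IsPrimitiveRoot.orderOf g)).pow_of_dvd
      (Nat.div_pos (Nat.le_of_dvd (by omega) hdvd) (by omega)).ne' (Nat.div_dvd_of_dvd hdvd)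
    rwa [Nat.div_div_self hdvd (by omega)] at this
  have hset :
      {z : F | z ^ q = z} = insert 0 (Polynomial.nthRootsFinset (q - 1) (1 : F) : Set F) := by
    ext z
    rw [Set.mem_insert_iff, Finset.mem_coe, Polynomial.mem_nthRootsFinset (by omega)]
    rcases eq_or_ne z 0 with rfl | hz
    · simp [zero_pow (by omega : q ≠ 0)]
    · rw [Set.mem_ofPred_eq, ← mul_eq_right₀ hz, ← pow_succ, Nat.sub_add_cancel hq.le]
      simp [hz]
  rw [hset, Set.ncard_insert_of_notMem, Set.ncard_coe_finset, hζ.card_nthRootsFinset]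
  · omega
  · simp [Polynomial.mem_nthRootsFinset (show 0 < q - 1 by omega),
      zero_pow (show q - 1 ≠ 0 by omega)]

theorem ncard_setOf_mul_pow_add_mul_eq_zero (hF : Fintype.card F = q ^ n) {m : ℕ}
    (hmn : m.Coprime n) {A B : F} (hAB : A ≠ 0 ∨ B ≠ 0) :
    {t : F | A * t ^ q ^ m + B * t = 0}.ncard ∈ ({1, q} : Set ℕ) := by
  have hQ : q ^ m ≠ 0 :=
    pow_ne_zero _ (zero_lt_one.trans (one_lt_and_ne_zero_of_card_eq_pow hF).1).ne'
  by_cases h : ∃ t₁ ≠ 0, A * t₁ ^ q ^ m + B * t₁ = 0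
  · obtain ⟨t₁, ht₁, hker⟩ := h
    have hA : A ≠ 0 := by
      rintro rfl
      exact hAB.resolve_left (not_not.mpr rfl) (by simpa [ht₁] using hker)
    have hset : {t : F | A * t ^ q ^ m + B * t = 0} = (t₁ * ·) '' {z : F | z ^ q = z} := by
      ext u
      simp only [Set.mem_ofPred_eq, Set.mem_image, ← pow_pow_eq_self_iff_of_coprime_s8 hF hmn]
      constructor
      · intro hu
        refine ⟨u / t₁, mul_left_cancel₀ (mul_ne_zero hA (pow_ne_zero (q ^ m) ht₁)) ?_,
          mul_div_cancel₀ u ht₁⟩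
        calc A * t₁ ^ q ^ m * (u / t₁) ^ q ^ m = A * u ^ q ^ m := by
              rw [div_pow, mul_assoc, mul_div_cancel₀ _ (pow_ne_zero _ ht₁)]
          _ = -B * t₁ * (u / t₁) := by
              rw [mul_assoc, mul_div_cancel₀ _ ht₁]
              linear_combination hu
          _ = A * t₁ ^ q ^ m * (u / t₁) := by linear_combination -(u / t₁) * hker
      · rintro ⟨z, hz, rfl⟩
        rw [mul_pow, hz]
        linear_combination z * hker
    rw [hset, Set.ncard_image_of_injective _ (mul_right_injective₀ ht₁),
      ncard_setOf_pow_eq_self_s8 hF]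
    exact Or.inr rfl
  · push Not at h
    refine Or.inl (Set.ncard_eq_one.mpr ⟨0, Set.eq_singleton_iff_unique_mem.mpr ⟨?_, ?_⟩⟩)
    · simp [zero_pow hQ]
    · exact fun t ht => by_contra fun h0 => h t h0 ht

end FiniteField

theorem AddMonoidHom.ncard_preimage_singleton {G H : Type*} [AddGroup G] [AddGroup H]
    (f : G →+ H) (c : H) :
    (f ⁻¹' {c}).ncard = 0 ∨ (f ⁻¹' {c}).ncard = (f ⁻¹' {0}).ncard := by
  by_cases hc : c ∈ Set.range f
  · obtain ⟨t₀, rfl⟩ := hc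
    have hset : f ⁻¹' {f t₀} = (t₀ + ·) '' (f ⁻¹' {0}) := by
      ext t
      simp only [Set.mem_preimage, Set.mem_singleton_iff, Set.mem_image]
      constructor
      · intro ht
        exact ⟨-t₀ + t, by simp [ht], add_neg_cancel_left t₀ t⟩
      · rintro ⟨u, hu, rfl⟩
        simp [hu]
    rw [hset, Set.ncard_image_of_injective _ (add_right_injective t₀)]
    exact Or.inr rfl
  · rw [Set.preimage_singleton_eq_empty.mpr hc, Set.ncard_empty]
    exact Or.inl rfl

theorem ncard_setOf_mul_pow_add_mul_eq {F : Type*} [Field F] [Fintype F] {q n m : ℕ}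
    (hq : IsPrimePow q) (hF : Fintype.card F = q ^ n) (hmn : m.Coprime n) {A B : F}
    (hAB : A ≠ 0 ∨ B ≠ 0) (C : F) :
    {t : F | A * t ^ q ^ m + B * t = C}.ncard ∈ ({0, 1, q} : Set ℕ) := by
  let f : F →+ F := AddMonoidHom.mk' (fun t => A * t ^ q ^ m + B * t) fun x y => by
    rw [add_pow_pow_of_card_eq_pow hq hF]
    ring
  rcases f.ncard_preimage_singleton C with h | h
  · exact Or.inl h
  · change (f ⁻¹' {C}).ncard ∈ _
    rw [h]
    exact Or.inr (ncard_setOf_mul_pow_add_mul_eq_zero hF hmn hAB)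

section Projective

variable {K V : Type*} [Field K] [AddCommGroup V] [Module K V] {a b : V}

theorem Projectivization.mk_mem_setOf_rep_iff {p : V → Prop}
    (hp : ∀ (c : Kˣ) v, p (c • v) ↔ p v) {v : V} (hv : v ≠ 0) :
    Projectivization.mk K v hv ∈ {P : ℙ K V | p P.rep} ↔ p v := by
  obtain ⟨c, hc⟩ := Projectivization.exists_smul_eq_mk_rep K v hv
  rw [Set.mem_ofPred_eq, ← hc, hp]

theorem LinearIndependent.left_ne_zero (hab : LinearIndependent K ![a, b]) : a ≠ 0 :=
  hab.ne_zero 0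

theorem LinearIndependent.smul_add_ne_zero (hab : LinearIndependent K ![a, b]) (t : K) :
    t • a + b ≠ 0 := fun h => by
  simpa using (LinearIndependent.pair_iff.mp hab t 1 (by simpa using h)).2

theorem LinearIndependent.mk_smul_add_injective (hab : LinearIndependent K ![a, b]) :
    Injective fun t : K => Projectivization.mk K (t • a + b) (hab.smul_add_ne_zero t) := by
  intro t t' h
  obtain ⟨c, hc⟩ := (Projectivization.mk_eq_mk_iff' K _ _ _ _).mp h
  have := LinearIndependent.pair_iff.mp hab (c * t' - t) (c - 1) (by
    rw [← sub_eq_zero] at hc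
    linear_combination (norm := module) hc)
  linear_combination -this.1 + t' * this.2

theorem LinearIndependent.mk_smul_add_ne_mk (hab : LinearIndependent K ![a, b]) (t : K) :
    Projectivization.mk K (t • a + b) (hab.smul_add_ne_zero t) ≠
      Projectivization.mk K a hab.left_ne_zero := by
  intro h
  obtain ⟨c, hc⟩ := (Projectivization.mk_eq_mk_iff' K _ _ _ _).mp h
  have := LinearIndependent.pair_iff.mp hab (c - t) (-1) (by
    linear_combination (norm := module) hc)
  simp at this

theorem LinearIndependent.setOf_rep_mem_span_pair (hab : LinearIndependent K ![a, b]) :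
    {P : ℙ K V | P.rep ∈ span K {a, b}} = insert (Projectivization.mk K a hab.left_ne_zero)
      (Set.range fun t : K => Projectivization.mk K (t • a + b) (hab.smul_add_ne_zero t)) := by
  ext P
  induction P with | h v hv => ?_
  rw [Projectivization.mk_mem_setOf_rep_iff (p := (· ∈ span K {a, b}))
    (fun c _ => smul_mem_iff' _ c) hv, Set.mem_insert_iff, Set.mem_range, mem_span_pair]
  constructor
  · rintro ⟨s, t, rfl⟩
    rcases eq_or_ne t 0 with rfl | ht
    · exact Or.inl ((Projectivization.mk_eq_mk_iff' K _ _ _ _).mpr ⟨s, by simp⟩)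
    · refine Or.inr ⟨s / t, (Projectivization.mk_eq_mk_iff' K _ _ _ _).mpr ⟨t⁻¹, ?_⟩⟩
      rw [smul_add, smul_smul, smul_smul, inv_mul_cancel₀ ht, one_smul, div_eq_inv_mul]
  · rintro (h | ⟨t, h⟩)
    · obtain ⟨c, rfl⟩ := (Projectivization.mk_eq_mk_iff' K _ _ _ _).mp h
      exact ⟨c, 0, by simp⟩
    · obtain ⟨c, rfl⟩ := (Projectivization.mk_eq_mk_iff' K _ _ _ _).mp h.symm
      exact ⟨c * t, c, by module⟩

theorem LinearIndependent.ncard_setOf_rep_mem_span_pair_and [Finite K]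
    (hab : LinearIndependent K ![a, b]) {p : V → Prop} (hp : ∀ (c : Kˣ) v, p (c • v) ↔ p v)
    (ha : p a) :
    {P : ℙ K V | P.rep ∈ span K {a, b} ∧ p P.rep}.ncard = {t : K | p (t • a + b)}.ncard + 1 := by
  have hset : {P : ℙ K V | P.rep ∈ span K {a, b} ∧ p P.rep} =
      insert (Projectivization.mk K a hab.left_ne_zero)
        ((fun t : K => Projectivization.mk K (t • a + b) (hab.smul_add_ne_zero t)) ''
          {t : K | p (t • a + b)}) := by
    rw [Set.ofPred_and, hab.setOf_rep_mem_span_pair,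
      Set.insert_inter_of_mem ((Projectivization.mk_mem_setOf_rep_iff hp _).mpr ha),
      ← Set.image_preimage_eq_range_inter]
    congr 2
    ext t
    exact Projectivization.mk_mem_setOf_rep_iff hp _
  rw [hset, Set.ncard_insert_of_notMem (by rintro ⟨t, -, h⟩; exact hab.mk_smul_add_ne_mk t h),
    Set.ncard_image_of_injective _ hab.mk_smul_add_injective]

end Projective

theorem Submodule.exists_linearIndependent_pair_span_eq_of_finrank_eq_two {K V : Type*}
    [Field K] [AddCommGroup V] [Module K V] {W : Submodule K V} (hW : finrank K W = 2)
    (f : V →ₗ[K] K) :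
    ∃ a b : V, LinearIndependent K ![a, b] ∧ span K {a, b} = W ∧ f a = 0 := by
  have : FiniteDimensional K W := Module.finite_of_finrank_eq_succ hW
  obtain ⟨a, ha, ha0⟩ := exists_mem_ne_zero_of_ne_bot
    (LinearMap.ker_ne_bot_of_finrank_lt (f := f ∘ₗ W.subtype) (by rw [hW, finrank_self]; simp))
  obtain ⟨b, hab⟩ := exists_linearIndependent_pair_of_one_lt_finrank (by rw [hW]; simp) ha0
  have hab' : LinearIndependent K ![(a : V), b] := by
    have h := hab.map' W.subtype W.ker_subtype
    rwa [show W.subtype ∘ ![a, b] = ![(a : V), b] by ext i; fin_cases i <;> rfl] at h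
  refine ⟨a, b, hab', eq_of_le_of_finrank_eq ?_ ?_, ha⟩
  · simp [span_le, Set.insert_subset_iff]
  · rw [← Matrix.range_cons_cons_empty, finrank_span_eq_card hab', hW, Fintype.card_fin]

section DegenerateC

variable {F : Type*} [Field F]

def DegenerateCEquation (Q : ℕ) (x : Fin 3 → F) : Prop :=
  x 0 * x 2 ^ Q = x 1 ^ Q * x 2

theorem degenerateCEquation_smul_iff (Q : ℕ) (c : Fˣ) (x : Fin 3 → F) :
    DegenerateCEquation Q (c • x) ↔ DegenerateCEquation Q x := by
  calc DegenerateCEquation Q (c • x)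
      ↔ (c : F) ^ (Q + 1) * (x 0 * x 2 ^ Q) = (c : F) ^ (Q + 1) * (x 1 ^ Q * x 2) := by
        simp only [DegenerateCEquation, Pi.smul_apply, Units.smul_def, smul_eq_mul, mul_pow]
        constructor <;> intro h <;> linear_combination h
    _ ↔ DegenerateCEquation Q x := mul_right_inj' (pow_ne_zero _ c.ne_zero)

variable [Fintype F] {q n m : ℕ}

theorem ncard_setOf_degenerateCEquation_smul_add (hq : IsPrimePow q)
    (hF : Fintype.card F = q ^ n) (hmn : m.Coprime n) {a b : Fin 3 → F} (ha : a ≠ 0)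
    (ha₂ : a 2 = 0) :
    {t : F | DegenerateCEquation (q ^ m) (t • a + b)}.ncard ∈ ({0, 1, q, q ^ n} : Set ℕ) := by
  have hQ : q ^ m ≠ 0 := pow_ne_zero _ hq.ne_zero
  by_cases hb₂ : b 2 = 0
  · have hset : {t : F | DegenerateCEquation (q ^ m) (t • a + b)} = Set.univ := by
      ext t
      simp [DegenerateCEquation, ha₂, hb₂, zero_pow hQ]
    rw [hset, Set.ncard_univ, Nat.card_eq_fintype_card, hF]
    simp
  · have hAB : a 1 ^ q ^ m * b 2 ≠ 0 ∨ -(a 0 * b 2 ^ q ^ m) ≠ 0 := by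
      by_contra! h
      apply ha
      ext i
      fin_cases i
      · simpa [hb₂] using h.2
      · simpa [hb₂, hq.ne_zero] using h.1
      · exact ha₂
    have hset : {t : F | DegenerateCEquation (q ^ m) (t • a + b)} =
        {t : F | a 1 ^ q ^ m * b 2 * t ^ q ^ m + -(a 0 * b 2 ^ q ^ m) * t =
          b 0 * b 2 ^ q ^ m - b 1 ^ q ^ m * b 2} := by
      ext t
      simp only [Set.mem_ofPred_eq, DegenerateCEquation, Pi.add_apply, Pi.smul_apply,
        smul_eq_mul, ha₂, mul_zero, zero_add, add_pow_pow_of_card_eq_pow hq hF, mul_pow]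
      constructor <;> intro h <;> linear_combination -h
    have := ncard_setOf_mul_pow_add_mul_eq hq hF hmn hAB (b 0 * b 2 ^ q ^ m - b 1 ^ q ^ m * b 2)
    rw [hset]
    simp only [Set.mem_insert_iff, Set.mem_singleton_iff] at this ⊢
    tauto

end DegenerateC

theorem degenerate_CFm_set_type_wrt_lines_general
    (q n m : ℕ) (hq : IsPrimePow q)
    (hmn : Nat.gcd m n = 1)
    (F : Type*) [Field F] [Fintype F] (hF : Fintype.card F = q ^ n)
    (Γ : Set (ℙ F (Fin 3 → F)))
    (hΓ : Γ = {P : ℙ F (Fin 3 → F) |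
      P.rep 0 * (P.rep 2) ^ (q ^ m) = (P.rep 1) ^ (q ^ m) * P.rep 2})
    (W : Submodule F (Fin 3 → F)) (hW : Module.finrank F ↥W = 2) :
    (projLine F W ∩ Γ).ncard ∈ ({1, 2, q + 1, q ^ n + 1} : Set ℕ) := by
  obtain ⟨a, b, hab, rfl, ha₂⟩ : ∃ a b : Fin 3 → F,
      LinearIndependent F ![a, b] ∧ span F {a, b} = W ∧ a 2 = 0 :=
    exists_linearIndependent_pair_span_eq_of_finrank_eq_two hW (LinearMap.proj 2)
  have ha : DegenerateCEquation (q ^ m) a := by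
    simp [DegenerateCEquation, ha₂, hq.ne_zero]
  have hcount : (projLine F (span F {a, b}) ∩ Γ).ncard =
      {t : F | DegenerateCEquation (q ^ m) (t • a + b)}.ncard + 1 := by
    subst hΓ
    exact hab.ncard_setOf_rep_mem_span_pair_and (degenerateCEquation_smul_iff _) ha
  have := ncard_setOf_degenerateCEquation_smul_add hq hF hmn (b := b) hab.left_ne_zero ha₂
  simp only [hcount, Set.mem_insert_iff, Set.mem_singleton_iff] at this ⊢
  omega

/-- The degenerate C_F^m-set Γ = {[x] ∈ PG(2,qⁿ) : x₁x₃^(q^m) = x₂^(q^m)x₃}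
is a set of type (1,2,q+1,qⁿ+1) with respect to lines. -/
theorem degenerate_CFm_set_type_wrt_lines
    (q n m : ℕ) (hq : IsPrimePow q) (hn : 1 ≤ n) (hm : 0 < m)
    (hmn : Nat.gcd m n = 1)
    (F : Type*) [Field F] [Fintype F] (hF : Fintype.card F = q ^ n)
    (Γ : Set (ℙ F (Fin 3 → F)))
    (hΓ : Γ = {P : ℙ F (Fin 3 → F) |
      P.rep 0 * (P.rep 2) ^ (q ^ m) = (P.rep 1) ^ (q ^ m) * P.rep 2})
    (W : Submodule F (Fin 3 → F)) (hW : Module.finrank F ↥W = 2) :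
    (projLine F W ∩ Γ).ncard ∈ ({1, 2, q + 1, q ^ n + 1} : Set ℕ) :=
  degenerate_CFm_set_type_wrt_lines_general q n m hq hmn F hF Γ hΓ W hW
end

section
/- Let q be a prime power, n ≥ 1, F = 𝔽_{q^n}, m a positive integer with gcd(m,n) = 1, σ : x ↦ x^{q^m}, and let A be a 3×3 matrix over F of rank 2 whose left radical {x ∈ F³ : XᵀAY^σ = 0 for all y} and right radical {y ∈ F³ : XᵀAY^σ = 0 for all x} are distinct (1-dimensional) subspaces. Then the σ-conic Γ = {[x] ∈ PG(2,q^n) : XᵀAX^σ = 0} is projectively equivalent to exactly one of the following: (i) a degenerate C_F^m-set with equation x₂(a x₁x₂^{q^m−1} + c x₂^{q^m} + x₃^{q^m}) = 0 for some a, c ∈ F with a ≠ 0, or (ii) a C_F^m-set with equation (a x₁ + c x₂)x₂^{q^m} + x₁x₃^{q^m} = 0 for some a, c ∈ F with c ≠ 0; i.e., there is an invertible 3×3 matrix M over F mapping Γ onto one of these point sets. -/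
/-!
Since x ↦ x^(q^m) is a field automorphism σ of F, everything happens for an arbitrary
σ-sesquilinear form B(x, y) = xᵀ A σ(y) with A of rank 2. Its left radical is spanned by some u
and its right radical by some s; these are independent when the radicals are distinct, so
(s, t, u) is a basis for a suitable t. In that basis the Gram matrix has zero first column and
zero last row, so B(x, x) = a x₀ σ(x₁) + b x₀ σ(x₂) + c x₁ σ(x₁) + d x₁ σ(x₂), and the rank
condition says ad - bc ≠ 0. If b = 0 this is d times the degenerate C_F^m-set equation; if
b ≠ 0 the shear x₀ ↦ x₀ + (d/b) x₁ turns it into b times the C_F^m-set equation.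
-/

open scoped LinearAlgebra.Projectivization

open Matrix Module

section

variable {F : Type*} [Field F]

def sesqForm {ι : Type*} [Fintype ι] (σ : F →+* F) (A : Matrix ι ι F) (x y : ι → F) : F :=
  ∑ i, ∑ j, A i j * x i * σ (y j)

theorem RingHom.comp_single_one {ι : Type*} [DecidableEq ι] (σ : F →+* F) (j : ι) :
    σ ∘ Pi.single j 1 = Pi.single j 1 :=
  funext fun k => (Pi.apply_single (fun _ => σ) (fun _ => map_zero σ) j 1 k).trans <| by
    rw [map_one]

section SesqForm

variable {ι : Type*} [Fintype ι] (σ : F →+* F) (A : Matrix ι ι F)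

theorem sesqForm_eq_vecMul_dotProduct (x y : ι → F) :
    sesqForm σ A x y = (x ᵥ* A) ⬝ᵥ (σ ∘ y) := by
  simp only [sesqForm, vecMul, dotProduct, Finset.sum_mul, Function.comp_apply]
  exact Finset.sum_comm.trans (by simp only [mul_comm (x _)])

theorem sesqForm_eq_dotProduct_mulVec (x y : ι → F) :
    sesqForm σ A x y = x ⬝ᵥ (A *ᵥ (σ ∘ y)) := by
  rw [sesqForm_eq_vecMul_dotProduct, dotProduct_mulVec]

theorem sesqForm_vecMul_vecMul (R : Matrix ι ι F) (x y : ι → F) :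
    sesqForm σ A (x ᵥ* R) (y ᵥ* R) = sesqForm σ (R * A * (R.map σ)ᵀ) x y := by
  have hσR : σ ∘ (y ᵥ* R) = (σ ∘ y) ᵥ* R.map σ := funext (RingHom.map_vecMul σ R y)
  rw [sesqForm_eq_vecMul_dotProduct, sesqForm_eq_vecMul_dotProduct, hσR,
    ← mulVec_transpose (R.map σ), dotProduct_mulVec, vecMul_vecMul, vecMul_vecMul,
    Matrix.mul_assoc]

variable [DecidableEq ι]

theorem forall_sesqForm_eq_zero_iff_vecMul_eq_zero (x : ι → F) :
    (∀ y, sesqForm σ A x y = 0) ↔ x ᵥ* A = 0 := by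
  refine ⟨fun h => funext fun j => ?_, fun h y => ?_⟩
  · simpa [sesqForm_eq_vecMul_dotProduct, RingHom.comp_single_one] using h (Pi.single j 1)
  · rw [sesqForm_eq_vecMul_dotProduct, h, zero_dotProduct]

theorem forall_sesqForm_eq_zero_iff_mulVec_eq_zero (y : ι → F) :
    (∀ x, sesqForm σ A x y = 0) ↔ A *ᵥ (σ ∘ y) = 0 := by
  refine ⟨fun h => funext fun i => ?_, fun h x => ?_⟩
  · simpa [sesqForm_eq_dotProduct_mulVec] using h (Pi.single i 1)
  · rw [sesqForm_eq_dotProduct_mulVec, h, dotProduct_zero]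

theorem sesqForm_single_single (i j : ι) :
    sesqForm σ A (Pi.single i 1) (Pi.single j 1) = A i j := by
  simp [sesqForm_eq_vecMul_dotProduct, RingHom.comp_single_one]

theorem mul_mul_transpose_map_apply (R : Matrix ι ι F) (i j : ι) :
    (R * A * (R.map σ)ᵀ) i j = sesqForm σ A (R i) (R j) := by
  rw [← sesqForm_single_single σ (R * A * (R.map σ)ᵀ), ← sesqForm_vecMul_vecMul,
    single_one_vecMul, single_one_vecMul]
  rfl

end SesqForm

theorem Matrix.finrank_ker_mulVecLin {m n : Type*} [Fintype m] [Fintype n]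
    (A : Matrix m n F) : finrank F (LinearMap.ker A.mulVecLin) = Fintype.card n - A.rank := by
  have := LinearMap.finrank_range_add_finrank_ker A.mulVecLin
  rw [Module.finrank_fintype_fun_eq_card] at this
  unfold Matrix.rank
  omega

theorem Submodule.exists_eq_span_singleton_of_finrank_eq_one {V : Type*} [AddCommGroup V]
    [Module F V] {S : Submodule F V} (h : finrank F S = 1) : ∃ w ≠ 0, S = F ∙ w := by
  obtain ⟨w, hw0, -⟩ := finrank_eq_one_iff'.mp h
  have hw0' : (w : V) ≠ 0 := by simpa using hw0
  exact ⟨w, hw0', eq_span_singleton_of_mem_of_finrank_eq_one h w.2 hw0'⟩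

theorem comp_mem_span_singleton_iff {ι : Type*} {σ : F →+* F} (hσ : Function.Surjective σ)
    {s y : ι → F} : σ ∘ y ∈ F ∙ (σ ∘ s) ↔ y ∈ F ∙ s := by
  have hsmul : ∀ c, σ ∘ (c • s) = σ c • (σ ∘ s) := fun c => by ext; simp
  simp only [Submodule.mem_span_singleton]
  constructor
  · rintro ⟨c, hc⟩
    obtain ⟨c, rfl⟩ := hσ c
    exact ⟨c, σ.injective.comp_left ((hsmul c).trans hc)⟩
  · rintro ⟨c, rfl⟩
    exact ⟨σ c, (hsmul c).symm⟩

theorem Matrix.ker_mulVecLin_transpose_eq_span_single_two (G : Matrix (Fin 3) (Fin 3) F)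
    (hG : G.rank = 2) (hrow : ∀ j, G 2 j = 0) :
    LinearMap.ker Gᵀ.mulVecLin = F ∙ Pi.single 2 1 := by
  refine eq_span_singleton_of_mem_of_finrank_eq_one ?_ ?_ (by simp)
  · rw [finrank_ker_mulVecLin, rank_transpose, hG]; rfl
  · ext j; simp [hrow]

theorem Matrix.det_minor_ne_zero_of_rank_eq_two (G : Matrix (Fin 3) (Fin 3) F)
    (hG : G.rank = 2) (hcol : ∀ i, G i 0 = 0) (hrow : ∀ j, G 2 j = 0) :
    G 0 1 * G 1 2 - G 0 2 * G 1 1 ≠ 0 := by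
  intro h
  obtain ⟨v, hv0, hv⟩ := exists_vecMul_eq_zero_iff.mpr
    (show (!![G 0 1, G 0 2; G 1 1, G 1 2]).det = 0 by rw [det_fin_two_of]; linear_combination h)
  have hker : ![v 0, v 1, 0] ∈ LinearMap.ker Gᵀ.mulVecLin := by
    have h1 := congrFun hv 0
    have h2 := congrFun hv 1
    simp only [vecMul, dotProduct, of_apply, cons_val', cons_val_zero, cons_val_fin_one,
      Fin.sum_univ_two, cons_val_one, Pi.zero_apply] at h1 h2
    ext j; fin_cases j <;> simp [vecMul, dotProduct, Fin.sum_univ_three, hcol, hrow, h1, h2]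
  rw [G.ker_mulVecLin_transpose_eq_span_single_two hG hrow,
    Submodule.mem_span_singleton] at hker
  obtain ⟨c, hc⟩ := hker
  have h0 : v 0 = 0 := by simpa using (congrFun hc 0).symm
  have h1 : v 1 = 0 := by simpa using (congrFun hc 1).symm
  exact hv0 (funext fun i => by fin_cases i <;> assumption)

theorem exists_linearIndependent_of_radicals_ne {σ : F →+* F} (hσ : Function.Surjective σ)
    (A : Matrix (Fin 3) (Fin 3) F) (hA : A.rank = 2)
    (hrad : {x | ∀ y, sesqForm σ A x y = 0} ≠ {y | ∀ x, sesqForm σ A x y = 0}) :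
    ∃ s u, LinearIndependent F ![s, u] ∧ A *ᵥ (σ ∘ s) = 0 ∧ u ᵥ* A = 0 := by
  have hline : ∀ B : Matrix (Fin 3) (Fin 3) F, B.rank = 2 →
      ∃ w ≠ 0, LinearMap.ker B.mulVecLin = F ∙ w := fun B hB =>
    Submodule.exists_eq_span_singleton_of_finrank_eq_one (by rw [finrank_ker_mulVecLin, hB]; rfl)
  obtain ⟨w, hw0, hw⟩ := hline A hA
  obtain ⟨u, hu0, hu⟩ := hline Aᵀ (by rw [rank_transpose, hA])
  obtain ⟨s, rfl⟩ := hσ.comp_left w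
  have hleft : {x | ∀ y, sesqForm σ A x y = 0} = F ∙ u := by
    ext x
    rw [Set.mem_ofPred_eq, forall_sesqForm_eq_zero_iff_vecMul_eq_zero, ← mulVec_transpose,
      SetLike.mem_coe, ← hu, LinearMap.mem_ker, mulVecLin_apply]
  have hright : {y | ∀ x, sesqForm σ A x y = 0} = F ∙ s := by
    ext y
    rw [Set.mem_ofPred_eq, forall_sesqForm_eq_zero_iff_mulVec_eq_zero, SetLike.mem_coe,
      ← comp_mem_span_singleton_iff hσ, ← hw, LinearMap.mem_ker, mulVecLin_apply]
  refine ⟨s, u, ?_, ?_, ?_⟩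
  · rw [LinearIndependent.pair_symm_iff, LinearIndependent.pair_iff' hu0]
    rintro a rfl
    have ha : a ≠ 0 := by rintro rfl; simp at hw0
    exact hrad (by rw [hleft, hright, Submodule.span_singleton_smul_eq (Ne.isUnit ha)])
  · rw [← mulVecLin_apply, ← LinearMap.mem_ker, hw]
    exact Submodule.mem_span_singleton_self _
  · rw [← mulVec_transpose, ← mulVecLin_apply, ← LinearMap.mem_ker, hu]
    exact Submodule.mem_span_singleton_self _

theorem exists_isUnit_of_linearIndependent_pair {s u : Fin 3 → F}
    (hsu : LinearIndependent F ![s, u]) :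
    ∃ R : Matrix (Fin 3) (Fin 3) F, IsUnit R ∧ R 0 = s ∧ R 2 = u := by
  obtain ⟨t, ht⟩ := exists_linearIndependent_cons_of_lt_finrank hsu (by simp)
  refine ⟨Matrix.of ![s, t, u], linearIndependent_rows_iff_isUnit.mp ?_, rfl, rfl⟩
  refine (linearIndependent_equiv' (Equiv.swap 0 1) ?_).mp ht
  ext i : 1
  fin_cases i <;> rfl

-- The paper's equations, with coordinates x₁, x₂, x₃ indexed 0, 1, 2; in the degenerate one
-- the factor x₂ is multiplied in, since x₂ x₂^(q^m - 1) = x₂^σ has no analogue for general σ.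
def degenerateCSetForm (σ : F →+* F) (a c : F) (y : Fin 3 → F) : F :=
  a * y 0 * σ (y 1) + c * y 1 * σ (y 1) + y 1 * σ (y 2)

def cSetForm (σ : F →+* F) (a c : F) (y : Fin 3 → F) : F :=
  (a * y 0 + c * y 1) * σ (y 1) + y 0 * σ (y 2)

theorem exists_normalForm_of_zero_col_row (σ : F →+* F) (G : Matrix (Fin 3) (Fin 3) F)
    (hcol : ∀ i, G i 0 = 0) (hrow : ∀ j, G 2 j = 0)
    (hdet : G 0 1 * G 1 2 - G 0 2 * G 1 1 ≠ 0) :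
    ∃ P : Matrix (Fin 3) (Fin 3) F, P.det ≠ 0 ∧
      ((∃ a c, a ≠ 0 ∧ ∀ x, sesqForm σ G x x = 0 ↔ degenerateCSetForm σ a c (P *ᵥ x) = 0) ∨
        (∃ a c, c ≠ 0 ∧ ∀ x, sesqForm σ G x x = 0 ↔ cSetForm σ a c (P *ᵥ x) = 0)) := by
  set a := G 0 1
  set b := G 0 2
  set c := G 1 1
  set d := G 1 2
  have hform : ∀ x, sesqForm σ G x x =
      a * x 0 * σ (x 1) + b * x 0 * σ (x 2) + c * x 1 * σ (x 1) + d * x 1 * σ (x 2) := by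
    intro x
    simp only [sesqForm, Fin.sum_univ_three, hcol, hrow]
    ring
  by_cases hb : b = 0
  · have hd : d ≠ 0 := by rintro hd; simp [hb, hd] at hdet
    have ha : a ≠ 0 := by rintro ha; simp [hb, ha] at hdet
    refine ⟨1, by simp, Or.inl ⟨a / d, c / d, div_ne_zero ha hd, fun x => ?_⟩⟩
    have hfactor : sesqForm σ G x x = d * degenerateCSetForm σ (a / d) (c / d) x := by
      rw [hform, hb, degenerateCSetForm]
      field_simp
      ring
    rw [one_mulVec, hfactor, mul_eq_zero_iff_left hd]
  · set P : Matrix (Fin 3) (Fin 3) F := !![1, d / b, 0; 0, 1, 0; 0, 0, 1]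
    refine ⟨P, by simp [P, det_fin_three],
      Or.inr ⟨a / b, (b * c - a * d) / b ^ 2, ?_, fun x => ?_⟩⟩
    · exact div_ne_zero (fun h => hdet (by linear_combination -h)) (pow_ne_zero 2 hb)
    · have hfactor : sesqForm σ G x x =
          b * cSetForm σ (a / b) ((b * c - a * d) / b ^ 2) (P *ᵥ x) := by
        simp only [hform, cSetForm, P, mulVec, dotProduct, Fin.sum_univ_three, of_apply,
          cons_val', cons_val_zero, cons_val_one, cons_val_two, empty_val', cons_val_fin_one,
          head_cons, tail_cons, head_fin_const, zero_mul, one_mul, add_zero, zero_add]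
        field_simp
        ring
      rw [hfactor, mul_eq_zero_iff_left hb]

theorem exists_normalForm_of_rank_eq_two {σ : F →+* F} (hσ : Function.Surjective σ)
    (A : Matrix (Fin 3) (Fin 3) F) (hA : A.rank = 2)
    (hrad : {x | ∀ y, sesqForm σ A x y = 0} ≠ {y | ∀ x, sesqForm σ A x y = 0}) :
    ∃ M : Matrix (Fin 3) (Fin 3) F, M.det ≠ 0 ∧
      ((∃ a c, a ≠ 0 ∧ ∀ v, sesqForm σ A v v = 0 ↔ degenerateCSetForm σ a c (M *ᵥ v) = 0) ∨
        (∃ a c, c ≠ 0 ∧ ∀ v, sesqForm σ A v v = 0 ↔ cSetForm σ a c (M *ᵥ v) = 0)) := by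
  obtain ⟨s, u, hsu, hs, hu⟩ := exists_linearIndependent_of_radicals_ne hσ A hA hrad
  obtain ⟨R, hR, rfl, rfl⟩ := exists_isUnit_of_linearIndependent_pair hsu
  set G := R * A * (R.map σ)ᵀ
  have hcol : ∀ i, G i 0 = 0 := fun i => (mul_mul_transpose_map_apply σ A R i 0).trans <| by
    rw [sesqForm_eq_dotProduct_mulVec, hs, dotProduct_zero]
  have hrow : ∀ j, G 2 j = 0 := fun j => (mul_mul_transpose_map_apply σ A R 2 j).trans <| by
    rw [sesqForm_eq_vecMul_dotProduct, hu, zero_dotProduct]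
  have hRdet : IsUnit R.det := (isUnit_iff_isUnit_det R).mp hR
  have hG : G.rank = 2 := by
    rw [rank_mul_eq_left_of_isUnit_det _ _ (by rw [det_transpose]; exact σ.map_det R ▸ hRdet.map σ),
      rank_mul_eq_right_of_isUnit_det _ _ hRdet, hA]
  obtain ⟨P, hP, hnormal⟩ := exists_normalForm_of_zero_col_row σ G hcol hrow
    (G.det_minor_ne_zero_of_rank_eq_two hG hcol hrow)
  have hchange : ∀ v, sesqForm σ A v v = sesqForm σ G (R⁻¹ᵀ *ᵥ v) (R⁻¹ᵀ *ᵥ v) := fun v => by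
    rw [← sesqForm_vecMul_vecMul, mulVec_transpose, vecMul_vecMul, nonsing_inv_mul _ hRdet,
      vecMul_one]
  refine ⟨P * R⁻¹ᵀ, by simpa [det_nonsing_inv] using ⟨hP, hRdet.ne_zero⟩, ?_⟩
  rcases hnormal with ⟨a, c, ha, h⟩ | ⟨a, c, hc, h⟩
  · exact Or.inl ⟨a, c, ha, fun v => by rw [hchange, h, mulVec_mulVec]⟩
  · exact Or.inr ⟨a, c, hc, fun v => by rw [hchange, h, mulVec_mulVec]⟩

theorem exists_surjective_ringHom_eq_pow {q n : ℕ} (hq : IsPrimePow q) [Fintype F]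
    (hF : Fintype.card F = q ^ n) (m : ℕ) :
    ∃ σ : F →+* F, Function.Surjective σ ∧ ∀ x, σ x = x ^ q ^ m := by
  obtain ⟨p, e, hp, -, rfl⟩ := (isPrimePow_nat_iff q).mp hq
  have : Fact p.Prime := ⟨hp⟩
  have : CharP F p := charP_of_card_eq_prime_pow (f := e * n) (by rw [hF, pow_mul])
  exact ⟨iterateFrobenius F p (e * m), Finite.surjective_of_injective (RingHom.injective _),
    fun x => by rw [iterateFrobenius_def, pow_mul]⟩

end

theorem rank_two_distinct_radicals_sigma_conic_general
    (q n m : ℕ) (hq : IsPrimePow q)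
    (F : Type*) [Field F] [Fintype F] (hF : Fintype.card F = q ^ n)
    (A : Matrix (Fin 3) (Fin 3) F) (hA : A.rank = 2)
    (hrad : {x : Fin 3 → F | ∀ y : Fin 3 → F, sForm q m A x y = 0} ≠
      {y : Fin 3 → F | ∀ x : Fin 3 → F, sForm q m A x y = 0}) :
    ∃ M : Matrix (Fin 3) (Fin 3) F, M.det ≠ 0 ∧
      ((∃ a c : F, a ≠ 0 ∧ ∀ v : Fin 3 → F,
          (sForm q m A v v = 0 ↔
            (M.mulVec v 1) * (a * M.mulVec v 0 * (M.mulVec v 1) ^ (q ^ m - 1) +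
              c * (M.mulVec v 1) ^ (q ^ m) + (M.mulVec v 2) ^ (q ^ m)) = 0)) ∨
        (∃ a c : F, c ≠ 0 ∧ ∀ v : Fin 3 → F,
          (sForm q m A v v = 0 ↔
            (a * M.mulVec v 0 + c * M.mulVec v 1) * (M.mulVec v 1) ^ (q ^ m) +
              M.mulVec v 0 * (M.mulVec v 2) ^ (q ^ m) = 0))) := by
  obtain ⟨σ, hσ, hσpow⟩ := exists_surjective_ringHom_eq_pow hq hF m
  have hsForm : sForm q m A = sesqForm σ A := by
    ext x y
    simp only [sForm, sesqForm, hσpow]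
  rw [hsForm] at hrad ⊢
  obtain ⟨M, hM, hnormal⟩ := exists_normalForm_of_rank_eq_two hσ A hA hrad
  refine ⟨M, hM, hnormal.imp (fun ⟨a, c, ha, h⟩ => ⟨a, c, ha, fun v => ?_⟩)
    (fun ⟨a, c, hc, h⟩ => ⟨a, c, hc, fun v => ?_⟩)⟩
  · have hpow := mul_pow_sub_one (pow_ne_zero m hq.pos.ne') ((M *ᵥ v) 1)
    rw [h, degenerateCSetForm, hσpow, hσpow]
    constructor <;> intro h0
    · linear_combination h0 + a * (M *ᵥ v) 0 * hpow
    · linear_combination h0 - a * (M *ᵥ v) 0 * hpow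
  · rw [h, cSetForm, hσpow, hσpow]

/-- If A is a 3×3 matrix of rank 2 over F = 𝔽_{qⁿ} whose left and right
radicals are distinct, then the σ-conic Γ = {[x] : Xᵀ A X^σ = 0} is projectively
equivalent (via an invertible matrix M) to either a degenerate C_F^m-set with equation
x₂(a x₁x₂^(q^m−1) + c x₂^(q^m) + x₃^(q^m)) = 0 (a ≠ 0), or a C_F^m-set with equation
(a x₁ + c x₂)x₂^(q^m) + x₁x₃^(q^m) = 0 (c ≠ 0). -/
theorem rank_two_distinct_radicals_sigma_conic
    (q n m : ℕ) (hq : IsPrimePow q) (hn : 1 ≤ n) (hm : 0 < m)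
    (hmn : Nat.gcd m n = 1)
    (F : Type*) [Field F] [Fintype F] (hF : Fintype.card F = q ^ n)
    (A : Matrix (Fin 3) (Fin 3) F) (hA : A.rank = 2)
    (hrad : {x : Fin 3 → F | ∀ y : Fin 3 → F, sForm q m A x y = 0} ≠
      {y : Fin 3 → F | ∀ x : Fin 3 → F, sForm q m A x y = 0}) :
    ∃ M : Matrix (Fin 3) (Fin 3) F, M.det ≠ 0 ∧
      ((∃ a c : F, a ≠ 0 ∧ ∀ v : Fin 3 → F,
          (sForm q m A v v = 0 ↔
            (M.mulVec v 1) * (a * M.mulVec v 0 * (M.mulVec v 1) ^ (q ^ m - 1) +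
              c * (M.mulVec v 1) ^ (q ^ m) + (M.mulVec v 2) ^ (q ^ m)) = 0)) ∨
        (∃ a c : F, c ≠ 0 ∧ ∀ v : Fin 3 → F,
          (sForm q m A v v = 0 ↔
            (a * M.mulVec v 0 + c * M.mulVec v 1) * (M.mulVec v 1) ^ (q ^ m) +
              M.mulVec v 0 * (M.mulVec v 2) ^ (q ^ m) = 0))) :=
  rank_two_distinct_radicals_sigma_conic_general q n m hq F hF A hA hrad
end

section
/- Let q be an odd prime power, n ≥ 1, F = 𝔽_{q^{2n+1}}, and let m be a positive integer with gcd(m,2n+1) = 1. Then the point set Γ = {[x] ∈ PG(2,q^{2n+1}) : x₁^{q^m+1} + x₂^{q^m+1} + x₃^{q^m+1} = 0} has exactly q^{2n+1} + 1 points. -/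
open scoped LinearAlgebra.Projectivization
open Finset

namespace HermAux

variable {F : Type*} [Field F] [Fintype F] [DecidableEq F]
set_option linter.unusedSectionVars false
set_option linter.unusedVariables false
set_option linter.unnecessarySimpa false

lemma sq_eq_one_cases {x : F} (h : x ^ 2 = 1) : x = 1 ∨ x = -1 := by
  have h2 : (x - 1) * (x + 1) = 0 := by linear_combination h
  rcases mul_eq_zero.mp h2 with h3 | h3
  · exact Or.inl (sub_eq_zero.mp h3)
  · exact Or.inr (eq_neg_of_add_eq_zero_left h3)

lemma pow_eq_one_cases {q n m : ℕ} (hcard : Fintype.card F = q ^ (2 * n + 1))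
    {x : F} (hx : x ^ (q ^ m + 1) = 1) : x = 1 ∨ x = -1 := by
  have hx0 : x ≠ 0 := by
    rintro rfl
    rw [zero_pow (Nat.succ_ne_zero _)] at hx
    exact zero_ne_one hx
  have h1 : x ^ q ^ m = x⁻¹ := by
    have h := hx
    rw [pow_succ] at h
    exact eq_inv_of_mul_eq_one_right (by linear_combination h)
  have hodd : ∀ j : ℕ, x ^ (q ^ m) ^ (2 * j + 1) = x⁻¹ := by
    intro j
    induction j with
    | zero => simpa using h1
    | succ j ih =>
      have e1 : (q ^ m) ^ (2 * (j + 1) + 1) = (q ^ m) ^ (2 * j + 1) * ((q ^ m) * (q ^ m)) := by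
        rw [← pow_add]
        ring
      rw [e1, pow_mul, pow_mul, ih, inv_pow, h1, inv_inv, h1]
  have hbase : x ^ q ^ (2 * n + 1) = x := by
    have h := FiniteField.pow_card x
    rwa [hcard] at h
  have hiter : ∀ k : ℕ, x ^ (q ^ (2 * n + 1)) ^ k = x := by
    intro k
    induction k with
    | zero => simpa using rfl
    | succ k ih => rw [pow_succ, pow_mul, ih, hbase]
  have hfix : x ^ (q ^ m) ^ (2 * n + 1) = x := by
    have hexp : (q ^ m) ^ (2 * n + 1) = (q ^ (2 * n + 1)) ^ m := by
      rw [← pow_mul, ← pow_mul, Nat.mul_comm]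
    rw [hexp]
    exact hiter m
  have h2 : x = x⁻¹ := hfix.symm.trans (hodd n)
  have h3 : x ^ 2 = 1 := by
    rw [sq]
    nth_rewrite 2 [h2]
    exact mul_inv_cancel₀ hx0
  exact sq_eq_one_cases h3

lemma ne_neg_self (hchar : ringChar F ≠ 2) {x : F} (hx : x ≠ 0) : x ≠ -x := by
  intro h
  have h2 : (2 : F) * x = 0 := by
    rw [two_mul]
    nth_rewrite 1 [h]
    ring
  rcases mul_eq_zero.mp h2 with h3 | h3
  · exact Ring.two_ne_zero hchar h3
  · exact hx h3

lemma filter_pow_eq_pair (hchar : ringChar F ≠ 2) {k : ℕ} (hk0 : k ≠ 0) (hk2 : 2 ∣ k)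
    (hker : ∀ x : F, x ^ k = 1 → x = 1 ∨ x = -1) {a x0 : F} (ha : a ≠ 0) (h0 : x0 ^ k = a) :
    (univ.filter fun x : F => x ^ k = a) = {x0, -x0} := by
  have hx0 : x0 ≠ 0 := by
    rintro rfl
    rw [zero_pow hk0] at h0
    exact ha h0.symm
  ext x
  simp only [mem_filter, mem_univ, true_and, mem_insert, mem_singleton]
  constructor
  · intro hx
    have h1 : (x * x0⁻¹) ^ k = 1 := by
      rw [mul_pow, inv_pow, hx, h0, mul_inv_cancel₀ ha]
    rcases hker _ h1 with h | h
    · exact Or.inl ((mul_inv_eq_one₀ hx0).mp h)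
    · right
      have h4 : x = x * x0⁻¹ * x0 := (inv_mul_cancel_right₀ hx0 x).symm
      rw [h4, h]
      ring
  · rintro (rfl | rfl)
    · exact h0
    · rw [Even.neg_pow ((even_iff_two_dvd).mpr hk2), h0]

lemma card_fiber_eq (hchar : ringChar F ≠ 2) {e : ℕ} (he0 : e ≠ 0) (he2 : 2 ∣ e)
    (hker : ∀ x : F, x ^ e = 1 → x = 1 ∨ x = -1) :
    ∀ a : F, #(univ.filter fun x : F => x ^ e = a) = #(univ.filter fun x : F => x ^ 2 = a) := by
  have hker2 : ∀ x : F, x ^ 2 = 1 → x = 1 ∨ x = -1 := fun x hx => sq_eq_one_cases hx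
  have hle : ∀ a : F, #(univ.filter fun x : F => x ^ e = a) ≤
      #(univ.filter fun x : F => x ^ 2 = a) := by
    intro a
    rcases eq_or_ne a 0 with rfl | ha
    · have h1 : (univ.filter fun x : F => x ^ e = 0) = {0} := by
        ext x; simp [pow_eq_zero_iff, he0]
      have h2 : (univ.filter fun x : F => x ^ 2 = 0) = {0} := by
        ext x; simp [pow_eq_zero_iff]
      rw [h1, h2]
    · by_cases hex : ∃ x0 : F, x0 ^ e = a
      · obtain ⟨x0, h0⟩ := hex
        have hx0 : x0 ≠ 0 := by
          rintro rfl
          rw [zero_pow he0] at h0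
          exact ha h0.symm
        have hb : (x0 ^ (e / 2)) ^ 2 = a := by
          rw [← pow_mul, Nat.div_mul_cancel he2, h0]
        have hbne : x0 ^ (e / 2) ≠ 0 := pow_ne_zero _ hx0
        rw [filter_pow_eq_pair hchar he0 he2 hker ha h0,
          filter_pow_eq_pair hchar two_ne_zero ⟨1, rfl⟩ hker2 ha hb,
          card_pair (ne_neg_self hchar hx0), card_pair (ne_neg_self hchar hbne)]
      · have h1 : (univ.filter fun x : F => x ^ e = a) = ∅ := by
          rw [filter_eq_empty_iff]
          exact fun x _ hx => hex ⟨x, hx⟩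
        rw [h1]
        simp
  have hsum : ∑ a : F, #(univ.filter fun x : F => x ^ e = a)
      = ∑ a : F, #(univ.filter fun x : F => x ^ 2 = a) := by
    rw [← Finset.card_eq_sum_card_fiberwise (f := fun x : F => x ^ e)
        (t := (univ : Finset F)) (fun x _ => mem_univ _),
      ← Finset.card_eq_sum_card_fiberwise (f := fun x : F => x ^ 2)
        (t := (univ : Finset F)) (fun x _ => mem_univ _)]
  exact fun a => (Finset.sum_eq_sum_iff_of_le fun i _ => hle i).mp hsum a (mem_univ a)

lemma sum_transfer {M : Type*} [AddCommMonoid M] {e : ℕ}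
    (hfib : ∀ a : F, #(univ.filter fun x : F => x ^ e = a)
      = #(univ.filter fun x : F => x ^ 2 = a))
    (h : F → M) : ∑ t : F, h (t ^ e) = ∑ t : F, h (t ^ 2) := by
  have key : ∀ k : ℕ, ∑ t : F, h (t ^ k)
      = ∑ a : F, #(univ.filter fun x : F => x ^ k = a) • h a := by
    intro k
    rw [← Finset.sum_fiberwise univ (fun t : F => t ^ k) (fun t => h (t ^ k))]
    refine Finset.sum_congr rfl fun a _ => ?_
    rw [Finset.sum_congr rfl (fun x hx => by rw [(mem_filter.mp hx).2] : ∀ x ∈ univ.filter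
      (fun x : F => x ^ k = a), h (x ^ k) = h a), Finset.sum_const]
  rw [key e, key 2]
  exact Finset.sum_congr rfl fun a _ => by rw [hfib a]

lemma sum_shift_zero (hchar : ringChar F ≠ 2) (b : F) :
    ∑ a : F, quadraticChar F (a + b) = 0 := by
  rw [← quadraticChar_sum_zero hchar]
  exact Fintype.sum_equiv (Equiv.addRight b) (fun a => quadraticChar F (a + b))
    (fun a => quadraticChar F a) fun a => rfl

lemma sum_chi_mul_shift (hchar : ringChar F ≠ 2) :
    ∑ a : F, quadraticChar F a * quadraticChar F (a + 1) = -1 := by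
  have h0 : quadraticChar F (0 : F) * quadraticChar F ((0 : F) + 1) = 0 := by
    simp [quadraticChar_zero]
  have hsplit : ∑ a ∈ univ.erase (0 : F), quadraticChar F a * quadraticChar F (a + 1)
      = ∑ a : F, quadraticChar F a * quadraticChar F (a + 1) := Finset.sum_erase univ h0
  rw [← hsplit]
  have key : ∀ a ∈ univ.erase (0 : F),
      quadraticChar F a * quadraticChar F (a + 1) = quadraticChar F (1 + a⁻¹) := by
    intro a ha
    have ha0 : a ≠ 0 := (mem_erase.mp ha).1
    have h2 : a * (a + 1) = a ^ 2 * (1 + a⁻¹) := by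
      field_simp
    rw [← map_mul, h2, map_mul, quadraticChar_sq_one' ha0, one_mul]
  rw [Finset.sum_congr rfl key]
  have hre : ∑ a ∈ univ.erase (0 : F), quadraticChar F (1 + a⁻¹)
      = ∑ a ∈ univ.erase (0 : F), quadraticChar F (1 + a) := by
    refine Finset.sum_nbij' (fun a => a⁻¹) (fun a => a⁻¹) ?_ ?_ ?_ ?_ ?_
    · intro a ha
      exact mem_erase.mpr ⟨inv_ne_zero (mem_erase.mp ha).1, mem_univ _⟩
    · intro a ha
      exact mem_erase.mpr ⟨inv_ne_zero (mem_erase.mp ha).1, mem_univ _⟩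
    · intro a _
      exact inv_inv a
    · intro a _
      exact inv_inv a
    · intro a _
      rfl
  rw [hre]
  have h1 : ∑ a ∈ univ.erase (0 : F), quadraticChar F (1 + a)
        + quadraticChar F (1 + (0 : F)) = ∑ a : F, quadraticChar F (1 + a) :=
    Finset.sum_erase_add univ _ (mem_univ 0)
  have h2 : ∑ a : F, quadraticChar F (1 + a) = 0 := by
    rw [← quadraticChar_sum_zero hchar]
    exact Fintype.sum_equiv (Equiv.addLeft (1 : F)) (fun a => quadraticChar F (1 + a))
      (fun a => quadraticChar F a) fun a => rfl
  have h3 : quadraticChar F (1 + (0 : F)) = 1 := by simp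
  rw [h2, h3] at h1
  linarith

lemma sum_chi_sq_add_one (hchar : ringChar F ≠ 2) :
    ∑ t : F, quadraticChar F (t ^ 2 + 1) = -1 := by
  rw [← Finset.sum_fiberwise univ (fun t : F => t ^ 2)
    (fun t : F => quadraticChar F (t ^ 2 + 1))]
  have step : ∀ a : F, ∑ t ∈ univ.filter (fun t : F => t ^ 2 = a),
      quadraticChar F (t ^ 2 + 1) = (quadraticChar F a + 1) * quadraticChar F (a + 1) := by
    intro a
    have hcard : (#(univ.filter fun x : F => x ^ 2 = a) : ℤ) = quadraticChar F a + 1 := by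
      have h := quadraticChar_card_sqrts hchar a
      rwa [Set.toFinset_setOf] at h
    calc ∑ t ∈ univ.filter (fun t : F => t ^ 2 = a), quadraticChar F (t ^ 2 + 1)
        = ∑ t ∈ univ.filter (fun t : F => t ^ 2 = a), quadraticChar F (a + 1) :=
          Finset.sum_congr rfl fun x hx => by rw [(mem_filter.mp hx).2]
      _ = #(univ.filter fun x : F => x ^ 2 = a) • quadraticChar F (a + 1) :=
          Finset.sum_const _
      _ = (#(univ.filter fun x : F => x ^ 2 = a) : ℤ) * quadraticChar F (a + 1) :=
          nsmul_eq_mul _ _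
      _ = (quadraticChar F a + 1) * quadraticChar F (a + 1) := by rw [hcard]
  rw [Finset.sum_congr rfl fun a _ => step a]
  have expand : ∑ a : F, (quadraticChar F a + 1) * quadraticChar F (a + 1)
      = (∑ a : F, quadraticChar F a * quadraticChar F (a + 1))
        + ∑ a : F, quadraticChar F (a + 1) := by
    rw [← Finset.sum_add_distrib]
    exact Finset.sum_congr rfl fun a _ => by ring
  rw [expand, sum_chi_mul_shift hchar, sum_shift_zero hchar 1]
  norm_num

lemma sum_chi_two_squares (hchar : ringChar F ≠ 2) :
    ∑ x : F, ∑ y : F, quadraticChar F (x ^ 2 + y ^ 2) = 0 := by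
  have hinner : ∀ x : F, x ≠ 0 → ∑ y : F, quadraticChar F (x ^ 2 + y ^ 2) = -1 := by
    intro x hx
    have reind : ∑ y : F, quadraticChar F (x ^ 2 + y ^ 2)
        = ∑ t : F, quadraticChar F (x ^ 2 + (x * t) ^ 2) :=
      (Fintype.sum_equiv (Equiv.mulLeft₀ x hx) (fun t => quadraticChar F (x ^ 2 + (x * t) ^ 2))
        (fun y => quadraticChar F (x ^ 2 + y ^ 2)) fun t => rfl).symm
    rw [reind]
    have hconv : ∀ t : F, quadraticChar F (x ^ 2 + (x * t) ^ 2)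
        = quadraticChar F (t ^ 2 + 1) := by
      intro t
      have h2 : x ^ 2 + (x * t) ^ 2 = x ^ 2 * (t ^ 2 + 1) := by ring
      rw [h2, map_mul, quadraticChar_sq_one' hx, one_mul]
    rw [Finset.sum_congr rfl fun t _ => hconv t]
    exact sum_chi_sq_add_one hchar
  have hcerase : #(univ.erase (0 : F)) = Fintype.card F - 1 := by
    rw [card_erase_of_mem (mem_univ _), card_univ]
  have h0 : ∑ y : F, quadraticChar F ((0 : F) ^ 2 + y ^ 2) = (Fintype.card F : ℤ) - 1 := by
    rw [← Finset.sum_erase_add univ _ (mem_univ (0 : F))]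
    have hterm : ∀ y ∈ univ.erase (0 : F),
        quadraticChar F ((0 : F) ^ 2 + y ^ 2) = 1 := by
      intro y hy
      rw [show (0 : F) ^ 2 + y ^ 2 = y ^ 2 by ring, quadraticChar_sq_one' (mem_erase.mp hy).1]
    rw [Finset.sum_congr rfl hterm, Finset.sum_const, nsmul_eq_mul, hcerase,
      Nat.cast_sub Fintype.card_pos, Nat.cast_one]
    simp
  rw [← Finset.sum_erase_add univ _ (mem_univ (0 : F)), h0,
    Finset.sum_congr rfl (fun x hx => hinner x (mem_erase.mp hx).1),
    Finset.sum_const, nsmul_eq_mul, hcerase, Nat.cast_sub Fintype.card_pos, Nat.cast_one]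
  ring

lemma triple_sum_sq (hchar : ringChar F ≠ 2) :
    ∑ x : F, ∑ y : F, ∑ z : F, (if x ^ 2 + y ^ 2 + z ^ 2 = 0 then (1 : ℕ) else 0)
      = Fintype.card F ^ 2 := by
  have key : ∀ x y : F, ∑ z : F, (if x ^ 2 + y ^ 2 + z ^ 2 = 0 then (1 : ℕ) else 0)
      = #(univ.filter fun z : F => z ^ 2 = -(x ^ 2 + y ^ 2)) := by
    intro x y
    rw [card_filter]
    refine Finset.sum_congr rfl fun z _ => ?_
    have hiff : (x ^ 2 + y ^ 2 + z ^ 2 = 0) ↔ (z ^ 2 = -(x ^ 2 + y ^ 2)) := by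
      constructor <;> intro h <;> linear_combination h
    exact if_congr hiff rfl rfl
  have main : (∑ x : F, ∑ y : F,
      (#(univ.filter fun z : F => z ^ 2 = -(x ^ 2 + y ^ 2)) : ℤ)) = (Fintype.card F : ℤ) ^ 2 := by
    have hcards : ∀ x y : F, (#(univ.filter fun z : F => z ^ 2 = -(x ^ 2 + y ^ 2)) : ℤ)
        = quadraticChar F (-(x ^ 2 + y ^ 2)) + 1 := by
      intro x y
      have h := quadraticChar_card_sqrts hchar (-(x ^ 2 + y ^ 2))
      rwa [Set.toFinset_setOf] at h
    have step1 : ∀ x : F, ∑ y : F, (#(univ.filter fun z : F => z ^ 2 = -(x ^ 2 + y ^ 2)) : ℤ)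
        = (∑ y : F, quadraticChar F (-(x ^ 2 + y ^ 2))) + Fintype.card F := by
      intro x
      rw [Finset.sum_congr rfl fun y _ => hcards x y, Finset.sum_add_distrib,
        Finset.sum_const, card_univ, nsmul_eq_mul, mul_one]
    rw [Finset.sum_congr rfl fun x _ => step1 x, Finset.sum_add_distrib, Finset.sum_const,
      card_univ, nsmul_eq_mul]
    have hneg : ∀ x y : F, quadraticChar F (-(x ^ 2 + y ^ 2))
        = quadraticChar F (-1) * quadraticChar F (x ^ 2 + y ^ 2) := by
      intro x y
      rw [← map_mul]
      norm_num
    have hzero : ∑ x : F, ∑ y : F, quadraticChar F (-(x ^ 2 + y ^ 2)) = 0 := by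
      calc ∑ x : F, ∑ y : F, quadraticChar F (-(x ^ 2 + y ^ 2))
          = ∑ x : F, ∑ y : F, quadraticChar F (-1) * quadraticChar F (x ^ 2 + y ^ 2) :=
            Finset.sum_congr rfl fun x _ => Finset.sum_congr rfl fun y _ => hneg x y
        _ = quadraticChar F (-1) * ∑ x : F, ∑ y : F, quadraticChar F (x ^ 2 + y ^ 2) := by
            rw [Finset.mul_sum]
            exact Finset.sum_congr rfl fun x _ => by rw [Finset.mul_sum]
        _ = 0 := by rw [sum_chi_two_squares hchar, mul_zero]
    rw [hzero, zero_add]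
    ring
  have hcast : ((∑ x : F, ∑ y : F,
      #(univ.filter fun z : F => z ^ 2 = -(x ^ 2 + y ^ 2)) : ℕ) : ℤ)
      = ((Fintype.card F ^ 2 : ℕ) : ℤ) := by
    push_cast
    exact main
  rw [Finset.sum_congr rfl fun x _ => Finset.sum_congr rfl fun y _ => key x y]
  exact_mod_cast hcast

lemma triple_sum_transfer {e : ℕ}
    (hfib : ∀ a : F, #(univ.filter fun x : F => x ^ e = a)
      = #(univ.filter fun x : F => x ^ 2 = a)) :
    ∑ x : F, ∑ y : F, ∑ z : F, (if x ^ e + y ^ e + z ^ e = 0 then (1 : ℕ) else 0)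
      = ∑ x : F, ∑ y : F, ∑ z : F, (if x ^ 2 + y ^ 2 + z ^ 2 = 0 then (1 : ℕ) else 0) := by
  have hz : ∀ u v : F, ∑ z : F, (if u + v + z ^ e = 0 then (1 : ℕ) else 0)
      = ∑ z : F, (if u + v + z ^ 2 = 0 then (1 : ℕ) else 0) :=
    fun u v => sum_transfer hfib (fun t => if u + v + t = 0 then 1 else 0)
  have hy : ∀ u : F, ∑ y : F, ∑ z : F, (if u + y ^ e + z ^ 2 = 0 then (1 : ℕ) else 0)
      = ∑ y : F, ∑ z : F, (if u + y ^ 2 + z ^ 2 = 0 then (1 : ℕ) else 0) :=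
    fun u => sum_transfer hfib (fun t => ∑ z : F, if u + t + z ^ 2 = 0 then 1 else 0)
  have hx : ∑ x : F, ∑ y : F, ∑ z : F, (if x ^ e + y ^ 2 + z ^ 2 = 0 then (1 : ℕ) else 0)
      = ∑ x : F, ∑ y : F, ∑ z : F, (if x ^ 2 + y ^ 2 + z ^ 2 = 0 then (1 : ℕ) else 0) :=
    sum_transfer hfib (fun t => ∑ y : F, ∑ z : F, if t + y ^ 2 + z ^ 2 = 0 then 1 else 0)
  calc ∑ x : F, ∑ y : F, ∑ z : F, (if x ^ e + y ^ e + z ^ e = 0 then (1 : ℕ) else 0)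
      = ∑ x : F, ∑ y : F, ∑ z : F, (if x ^ e + y ^ e + z ^ 2 = 0 then (1 : ℕ) else 0) :=
        Finset.sum_congr rfl fun x _ => Finset.sum_congr rfl fun y _ => hz (x ^ e) (y ^ e)
    _ = ∑ x : F, ∑ y : F, ∑ z : F, (if x ^ e + y ^ 2 + z ^ 2 = 0 then (1 : ℕ) else 0) :=
        Finset.sum_congr rfl fun x _ => hy (x ^ e)
    _ = ∑ x : F, ∑ y : F, ∑ z : F, (if x ^ 2 + y ^ 2 + z ^ 2 = 0 then (1 : ℕ) else 0) := hx

def equivFin3 (F : Type*) : (Fin 3 → F) ≃ F × F × F where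
  toFun v := (v 0, v 1, v 2)
  invFun p := ![p.1, p.2.1, p.2.2]
  left_inv v := by
    funext i
    fin_cases i <;> rfl
  right_inv p := rfl

lemma card_filter_fin3 {k : ℕ} :
    #(univ.filter fun v : Fin 3 → F => v 0 ^ k + v 1 ^ k + v 2 ^ k = 0)
      = ∑ x : F, ∑ y : F, ∑ z : F, (if x ^ k + y ^ k + z ^ k = 0 then (1 : ℕ) else 0) := by
  rw [card_filter]
  calc ∑ v : Fin 3 → F, (if v 0 ^ k + v 1 ^ k + v 2 ^ k = 0 then (1 : ℕ) else 0)
      = ∑ p : F × F × F, (if p.1 ^ k + p.2.1 ^ k + p.2.2 ^ k = 0 then (1 : ℕ) else 0) :=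
        Fintype.sum_equiv (equivFin3 F)
          (fun v => if v 0 ^ k + v 1 ^ k + v 2 ^ k = 0 then (1 : ℕ) else 0)
          (fun p => if p.1 ^ k + p.2.1 ^ k + p.2.2 ^ k = 0 then (1 : ℕ) else 0)
          (fun v => rfl)
    _ = ∑ x : F, ∑ q : F × F, (if x ^ k + q.1 ^ k + q.2 ^ k = 0 then (1 : ℕ) else 0) :=
        Fintype.sum_prod_type _
    _ = ∑ x : F, ∑ y : F, ∑ z : F, (if x ^ k + y ^ k + z ^ k = 0 then (1 : ℕ) else 0) :=
        Finset.sum_congr rfl fun x _ => Fintype.sum_prod_type _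

lemma final_arith {t Q : ℕ} (hQ2 : 1 < Q) (key : t * (Q - 1) = Q ^ 2 - 1) : t = Q + 1 := by
  obtain ⟨r, hr⟩ : ∃ r, Q = r + 1 := ⟨Q - 1, by omega⟩
  subst hr
  have h2 : (r + 1) ^ 2 - 1 = (r + 2) * r := by
    have h3 : (r + 1) ^ 2 = (r + 2) * r + 1 := by ring
    omega
  have h4 : r + 1 - 1 = r := by omega
  rw [h4, h2] at key
  have h5 : t = r + 2 := Nat.eq_of_mul_eq_mul_right (by omega) key
  omega

end HermAux

/-- For q an odd prime power and gcd(m,2n+1)=1, the point set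
Γ = {[x] ∈ PG(2,q^(2n+1)) : x₁^(q^m+1) + x₂^(q^m+1) + x₃^(q^m+1) = 0} has exactly
q^(2n+1) + 1 points. -/
theorem hermitian_like_card_odd_degree
    (q n m : ℕ) (hq : IsPrimePow q) (hqodd : Odd q) (hn : 1 ≤ n) (hm : 0 < m)
    (hmn : Nat.gcd m (2 * n + 1) = 1)
    (F : Type*) [Field F] [Fintype F] (hF : Fintype.card F = q ^ (2 * n + 1))
    (Γ : Set (ℙ F (Fin 3 → F)))
    (hΓ : Γ = {P : ℙ F (Fin 3 → F) |
      (P.rep 0) ^ (q ^ m + 1) + (P.rep 1) ^ (q ^ m + 1) + (P.rep 2) ^ (q ^ m + 1) = 0}) :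
    Γ.ncard = q ^ (2 * n + 1) + 1 := by
  classical
  letI : DecidableEq F := Classical.decEq F
  set Q := q ^ (2 * n + 1) with hQdef
  set e := q ^ m + 1 with hedef
  have hQ2 : 1 < Q := by
    rw [← hF]
    exact Fintype.one_lt_card
  have hcharF : ringChar F ≠ 2 := by
    intro h
    have h2 := FiniteField.even_card_iff_char_two.mp h
    rw [hF] at h2
    obtain ⟨k, hk⟩ := hqodd.pow (n := 2 * n + 1)
    omega
  have he0 : e ≠ 0 := Nat.succ_ne_zero _
  have he2 : 2 ∣ e := by
    obtain ⟨k, hk⟩ := hqodd.pow (n := m)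
    exact ⟨k + 1, by omega⟩
  have hker : ∀ x : F, x ^ e = 1 → x = 1 ∨ x = -1 :=
    fun x hx => HermAux.pow_eq_one_cases hF hx
  have hfib := HermAux.card_fiber_eq hcharF he0 he2 hker
  have htot : #(univ.filter fun v : Fin 3 → F => v 0 ^ e + v 1 ^ e + v 2 ^ e = 0) = Q ^ 2 := by
    rw [HermAux.card_filter_fin3, HermAux.triple_sum_transfer hfib,
      HermAux.triple_sum_sq hcharF, hF]
  set A := univ.filter (fun v : Fin 3 → F => v ≠ 0 ∧ v 0 ^ e + v 1 ^ e + v 2 ^ e = 0) with hAdef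
  have hAcard : #A = Q ^ 2 - 1 := by
    have hz : (0 : Fin 3 → F) ∈
        univ.filter (fun v : Fin 3 → F => v 0 ^ e + v 1 ^ e + v 2 ^ e = 0) := by
      simp [zero_pow he0]
    have hAe : A = (univ.filter
        (fun v : Fin 3 → F => v 0 ^ e + v 1 ^ e + v 2 ^ e = 0)).erase 0 := by
      ext v
      simp only [hAdef, mem_filter, mem_univ, true_and, mem_erase]
      try tauto
    rw [hAe, card_erase_of_mem hz, htot]
  haveI : Finite (ℙ F (Fin 3 → F)) := Quotient.finite _
  haveI := Fintype.ofFinite (ℙ F (Fin 3 → F))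
  have hhom : ∀ (c : F) (v : Fin 3 → F), (c • v) 0 ^ e + (c • v) 1 ^ e + (c • v) 2 ^ e
      = c ^ e * (v 0 ^ e + v 1 ^ e + v 2 ^ e) := by
    intro c v
    simp only [Pi.smul_apply, smul_eq_mul, mul_pow]
    ring
  have hnz : (fun _ : Fin 3 => (1 : F)) ≠ 0 := by
    intro h
    exact one_ne_zero (congrFun h 0)
  set g : (Fin 3 → F) → ℙ F (Fin 3 → F) :=
    fun v => if h : v ≠ 0 then Projectivization.mk F v h
      else Projectivization.mk F (fun _ => 1) hnz with hgdef
  have hmem : ∀ P : ℙ F (Fin 3 → F),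
      P ∈ Γ ↔ P.rep 0 ^ e + P.rep 1 ^ e + P.rep 2 ^ e = 0 := by
    intro P
    rw [hΓ]
    exact Iff.rfl
  have hmaps : ∀ v ∈ A, g v ∈ Γ.toFinset := by
    intro v hv
    obtain ⟨hv0, hveq⟩ := (mem_filter.mp hv).2
    rw [Set.mem_toFinset, hmem, hgdef]
    simp only [dif_pos hv0]
    obtain ⟨a, ha⟩ := Projectivization.exists_smul_eq_mk_rep F v hv0
    rw [← ha, Units.smul_def, hhom, hveq, mul_zero]
  have hfiber : ∀ P ∈ Γ.toFinset, #(A.filter fun v => g v = P) = Q - 1 := by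
    intro P hP
    have hrep0 : P.rep ≠ 0 := Projectivization.rep_nonzero P
    have hPeq : P.rep 0 ^ e + P.rep 1 ^ e + P.rep 2 ^ e = 0 :=
      (hmem P).mp (Set.mem_toFinset.mp hP)
    have hcardu : Fintype.card Fˣ = #(A.filter fun v => g v = P) := by
      rw [← card_univ]
      apply Finset.card_bij (fun (c : Fˣ) _ => (c : F) • P.rep)
      · intro c _
        have hcv : ((c : F) • P.rep) ≠ 0 := smul_ne_zero (Units.ne_zero c) hrep0
        refine mem_filter.mpr ⟨mem_filter.mpr ⟨mem_univ _, hcv, ?_⟩, ?_⟩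
        · rw [hhom, hPeq, mul_zero]
        · rw [hgdef]
          simp only [dif_pos hcv]
          conv_rhs => rw [← Projectivization.mk_rep P]
          rw [Projectivization.mk_eq_mk_iff]
          exact ⟨c, by rw [Units.smul_def]⟩
      · intro c _ c' _ hcc
        exact Units.ext (smul_left_injective F hrep0 hcc)
      · intro v hv
        obtain ⟨hvA, hgv⟩ := mem_filter.mp hv
        obtain ⟨hv0, hveq⟩ := (mem_filter.mp hvA).2
        rw [hgdef] at hgv
        simp only [dif_pos hv0] at hgv
        have hmk : Projectivization.mk F v hv0
            = Projectivization.mk F P.rep hrep0 := by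
          rw [hgv, Projectivization.mk_rep]
        obtain ⟨a, ha⟩ := (Projectivization.mk_eq_mk_iff F v P.rep hv0 hrep0).mp hmk
        refine ⟨a, mem_univ a, ?_⟩
        rw [← Units.smul_def, ha]
    rw [← hcardu, Fintype.card_units, hF]
  have hcount : #A = #Γ.toFinset * (Q - 1) := by
    rw [card_eq_sum_card_fiberwise hmaps, Finset.sum_congr rfl hfiber,
      Finset.sum_const, smul_eq_mul]
  have hΓcard : Γ.ncard = #Γ.toFinset := Set.ncard_eq_toFinset_card' Γ
  rw [hΓcard]
  exact HermAux.final_arith hQ2 (by rw [← hcount, hAcard])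
end

section
/- Let q be a prime power, n ≥ 3, F = 𝔽_{q^n}, m a positive integer with gcd(m,n) = 1, and let N : F → 𝔽_q, N(x) = x^{(q^n−1)/(q−1)}, be the norm over 𝔽_q. Let α, t, x ∈ F* satisfy N(α) ≠ N(t) and N(α) ≠ 1. Then the three vectors (x^{q^{2m}}, x^{q^m}, x), (α^{q^m+1}, α, 1) and (−t, 0, 1) of F³ are linearly independent over F; equivalently, the corresponding three points of PG(2,q^n) are not collinear. -/
/-- Let F = 𝔽_{qⁿ}, n ≥ 3, gcd(m,n) = 1 and let N(x) = x^((qⁿ−1)/(q−1))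
be the norm over 𝔽_q. If α, t, x ∈ F* satisfy N(α) ≠ N(t) and N(α) ≠ 1, then the three
vectors (x^(q^(2m)), x^(q^m), x), (α^(q^m+1), α, 1) and (−t, 0, 1) are linearly
independent over F. -/
theorem three_points_not_collinear
    (q n m : ℕ) (hq : IsPrimePow q) (hn : 3 ≤ n) (hm : 0 < m)
    (hmn : Nat.gcd m n = 1)
    (F : Type*) [Field F] [Fintype F] (hF : Fintype.card F = q ^ n)
    (α t x : F) (hα : α ≠ 0) (ht : t ≠ 0) (hx : x ≠ 0)
    (hNat : α ^ ((q ^ n - 1) / (q - 1)) ≠ t ^ ((q ^ n - 1) / (q - 1)))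
    (hNa1 : α ^ ((q ^ n - 1) / (q - 1)) ≠ 1) :
    LinearIndependent F
      ![![x ^ (q ^ (2 * m)), x ^ (q ^ m), x],
        ![α ^ (q ^ m + 1), α, 1],
        ![-t, 0, 1]] := by
  obtain ⟨p, k, hpp', hk, rfl⟩ := hq
  have hpp : p.Prime := hpp'.nat_prime
  haveI : Fact p.Prime := ⟨hpp⟩
  -- characteristic of F is p
  haveI : CharP F (ringChar F) := ringChar.charP F
  obtain ⟨a, hrprime, hcard'⟩ := FiniteField.card F (ringChar F)
  have hp_eq : ringChar F = p := by
    have h1 : (ringChar F) ^ (a : ℕ) = p ^ (k * n) := by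
      rw [← hcard', hF, ← pow_mul]
    have hdvd : ringChar F ∣ p := by
      have : ringChar F ∣ p ^ (k * n) := by
        rw [← h1]; exact dvd_pow_self _ (by positivity)
      exact hrprime.dvd_of_dvd_pow this
    exact ((Nat.prime_dvd_prime_iff_eq hrprime hpp).mp hdvd)
  haveI : CharP F p := hp_eq ▸ ringChar.charP F
  set Q : ℕ := p ^ k with hQ
  have hq2 : 2 ≤ Q := le_trans hpp.two_le (Nat.le_self_pow hk.ne' p)
  set M : ℕ := (Q ^ n - 1) / (Q - 1) with hM
  have hdvdn : (Q - 1) ∣ Q ^ n - 1 := by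
    simpa using Nat.sub_dvd_pow_sub_pow Q 1 n
  have hdvdm : (Q - 1) ∣ Q ^ m - 1 := by
    simpa using Nat.sub_dvd_pow_sub_pow Q 1 m
  have hMmul : M * (Q - 1) = Q ^ n - 1 := Nat.div_mul_cancel hdvdn
  -- key: norms are fixed by the q^m power map
  have key : ∀ z : F, z ≠ 0 → (z ^ M) ^ Q ^ m = z ^ M := by
    intro z hz
    have h1 : z ^ (Q ^ n - 1) = 1 := by
      have := FiniteField.pow_card_sub_one_eq_one z hz
      rwa [hF] at this
    have h2 : (z ^ M) ^ (Q - 1) = 1 := by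
      rw [← pow_mul, hMmul]; exact h1
    obtain ⟨c, hc⟩ := hdvdm
    have h3 : (z ^ M) ^ (Q ^ m - 1) = 1 := by
      rw [hc, pow_mul, h2, one_pow]
    have hQm1 : 1 ≤ Q ^ m := Nat.one_le_pow _ _ (by omega)
    calc (z ^ M) ^ Q ^ m = (z ^ M) ^ (Q ^ m - 1 + 1) := by rw [Nat.sub_add_cancel hQm1]
      _ = (z ^ M) ^ (Q ^ m - 1) * z ^ M := by rw [pow_succ]
      _ = z ^ M := by rw [h3, one_mul]
  -- Frobenius
  have frob : ∀ a b : F, (a - b) ^ Q ^ m = a ^ Q ^ m - b ^ Q ^ m := by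
    intro a b
    have : Q ^ m = p ^ (k * m) := by rw [hQ, ← pow_mul]
    rw [this]
    exact sub_pow_char_pow a b (k * m)
  -- the matrix
  set A : Matrix (Fin 3) (Fin 3) F :=
    Matrix.of ![![x ^ (Q ^ (2 * m)), x ^ (Q ^ m), x],
        ![α ^ (Q ^ m + 1), α, 1],
        ![-t, 0, 1]] with hA
  have hdet : A.det = α * x ^ Q ^ (2 * m) - α ^ (Q ^ m + 1) * x ^ Q ^ m
      - t * x ^ Q ^ m + α * t * x := by
    simp [hA, Matrix.det_fin_three, Matrix.vecHead, Matrix.vecTail]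
    ring
  have hdet0 : A.det ≠ 0 := by
    intro h0
    rw [hdet] at h0
    set y : F := x ^ Q ^ m - α * x with hy
    have hx2m : x ^ Q ^ (2 * m) = (x ^ Q ^ m) ^ Q ^ m := by
      have h2m : Q ^ (2 * m) = Q ^ m * Q ^ m := by rw [two_mul, pow_add]
      rw [h2m, pow_mul]
    have hyq : y ^ Q ^ m = x ^ Q ^ (2 * m) - α ^ Q ^ m * x ^ Q ^ m := by
      rw [hy, frob, mul_pow, hx2m]
    have hmain : α * y ^ Q ^ m - t * y = 0 := by
      rw [hyq, hy]
      have : α ^ (Q ^ m + 1) = α * α ^ Q ^ m := by rw [pow_succ, mul_comm]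
      linear_combination h0 - x ^ Q ^ m * this
    by_cases hy0 : y = 0
    · -- then x^{Q^m} = α x, so N α = 1
      have hxa : x ^ Q ^ m = α * x := by
        have := sub_eq_zero.mp hy0
        exact this
      have h1 : (x ^ M) ^ Q ^ m = α ^ M * x ^ M := by
        rw [← mul_pow, ← hxa, ← pow_mul, mul_comm M (Q ^ m), pow_mul]
      rw [key x hx] at h1
      have hxM : x ^ M ≠ 0 := pow_ne_zero _ hx
      have h2 : α ^ M * x ^ M = 1 * x ^ M := by rw [one_mul]; exact h1.symm
      exact hNa1 (mul_right_cancel₀ hxM h2)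
    · -- then α y^{Q^m} = t y, so N α = N t
      have heq : α * y ^ Q ^ m = t * y := by
        have := sub_eq_zero.mp hmain
        exact this
      have h1 : α ^ M * (y ^ M) ^ Q ^ m = t ^ M * y ^ M := by
        rw [← pow_mul, mul_comm M (Q ^ m), pow_mul, ← mul_pow, heq, mul_pow]
      rw [key y hy0] at h1
      have hyM : y ^ M ≠ 0 := pow_ne_zero _ hy0
      exact hNat (mul_right_cancel₀ hyM h1)
  have hunit : IsUnit A := (Matrix.isUnit_iff_isUnit_det A).mpr (Ne.isUnit hdet0)
  exact Matrix.linearIndependent_rows_iff_isUnit.mpr hunit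
end

section
/- Let q be a prime power, n ≥ 3, F = 𝔽_{q^n}, m a positive integer with gcd(m,n) = 1, and let N(x) = x^{(q^n−1)/(q−1)} denote the norm over 𝔽_q. Set R = [(1,0,0)], L = [(0,0,1)], and let C = {[(t^{q^m+1}, t, 1)] : t ∈ F} ∪ {R} be the C_F^m-set with vertices R and L; for a ∈ 𝔽_q* put C_a = {[(t^{q^m+1}, t, 1)] : N(t) = a} and J_a = {[(−t, 0, 1)] : N(t) = a}, and let C₁' = {[(x^{q^{2m}}, x^{q^m}, x)] : x ∈ F*} (which equals the component C₁). For every subset T of 𝔽_q* containing 1, the set X = (C \ ⋃_{a∈T} C_a) ∪ ⋃_{a∈T} J_a is an exterior set with respect to C₁': every line of PG(2,q^n) joining two distinct points of X is disjoint from C₁'. -/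
open scoped LinearAlgebra.Projectivization

private lemma norm_cancel_aux {F : Type*} [Field F] (σ : ℕ) (Nm : F → F)
    (hmul : ∀ a b : F, Nm (a * b) = Nm a * Nm b)
    (hσ : ∀ a : F, Nm (a ^ σ) = Nm a)
    (h0 : ∀ a : F, Nm a = 0 ↔ a = 0)
    {A B s u : F} (hA : A ≠ 0) (hB : B ≠ 0)
    (h : s * A ^ σ * B = u * A * B ^ σ) : Nm s = Nm u := by
  have h1 := congrArg Nm h
  simp only [hmul, hσ] at h1
  have hA' : Nm A ≠ 0 := fun h' => hA ((h0 A).mp h')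
  have hB' : Nm B ≠ 0 := fun h' => hB ((h0 B).mp h')
  exact mul_right_cancel₀ hA' (mul_right_cancel₀ hB' h1)

private lemma core_CC {F : Type*} [Field F] (σ : ℕ) (Nm : F → F)
    (hmul : ∀ a b : F, Nm (a * b) = Nm a * Nm b)
    (hσ : ∀ a : F, Nm (a ^ σ) = Nm a)
    (hsub : ∀ a b : F, (a - b) ^ σ = a ^ σ - b ^ σ)
    (h0 : ∀ a : F, Nm a = 0 ↔ a = 0)
    {t s u α β : F} (hts : t ≠ s) (htu : t ≠ u)
    (h1 : α * (t ^ σ * t) + β * (s ^ σ * s) = u ^ σ * u)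
    (h2 : α * t + β * s = u)
    (h3 : α + β = 1) : Nm s = Nm u := by
  apply norm_cancel_aux σ Nm hmul hσ h0 (sub_ne_zero.mpr hts) (sub_ne_zero.mpr htu)
  rw [hsub, hsub]
  linear_combination (-(t - s)) * h1 + (t * t ^ σ - s * s ^ σ) * h2 +
    (-(s * t) * (t ^ σ - s ^ σ)) * h3

private lemma core_CJ {F : Type*} [Field F] (σ : ℕ) (Nm : F → F)
    (hmul : ∀ a b : F, Nm (a * b) = Nm a * Nm b)
    (hσ : ∀ a : F, Nm (a ^ σ) = Nm a)
    (hsub : ∀ a b : F, (a - b) ^ σ = a ^ σ - b ^ σ)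
    (h0 : ∀ a : F, Nm a = 0 ↔ a = 0)
    {t s u α β : F} (htu : t ≠ u)
    (h1 : α * (t ^ σ * t) + β * (-s) = u ^ σ * u)
    (h2 : α * t = u)
    (h3 : α + β = 1) : Nm s = Nm u * Nm t := by
  have key : s * (t - u) = (u * t) * (t - u) ^ σ := by
    rw [hsub]
    linear_combination (-t) * h1 + (t * t ^ σ + s) * h2 + (-(s * t)) * h3
  have h4 := congrArg Nm key
  simp only [hmul, hσ] at h4
  have hB : Nm (t - u) ≠ 0 := fun h' => (sub_ne_zero.mpr htu) ((h0 _).mp h')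
  have := mul_right_cancel₀ hB h4
  rw [this]

/-- Let C be the C_F^m-set {[(t^(q^m+1), t, 1)] : t ∈ F} ∪ {R} of
PG(2,qⁿ) with vertices R = [(1,0,0)] and L = [(0,0,1)], let
C_a = {[(t^(q^m+1), t, 1)] : N(t) = a}, J_a = {[(−t, 0, 1)] : N(t) = a} and let
C₁' = {[(x^(q^(2m)), x^(q^m), x)] : x ∈ F*}. For every subset T of 𝔽_q* containing 1,
the set X = (C \ ⋃_{a∈T} C_a) ∪ ⋃_{a∈T} J_a is an exterior set with respect to C₁':
every line joining two distinct points of X is disjoint from C₁'. -/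
theorem exterior_set_with_respect_to_component
    (q n m : ℕ) (hq : IsPrimePow q) (hn : 3 ≤ n) (hm : 0 < m)
    (hmn : Nat.gcd m n = 1)
    (F : Type*) [Field F] [Fintype F] (hF : Fintype.card F = q ^ n)
    (N : F → F) (hN : ∀ x : F, N x = x ^ ((q ^ n - 1) / (q - 1)))
    (R : ℙ F (Fin 3 → F))
    (hR : R = Projectivization.mk F ![1, 0, 0] (by intro h; simpa using congrFun h 0))
    (C : Set (ℙ F (Fin 3 → F)))
    (hC : C = {P : ℙ F (Fin 3 → F) | ∃ t : F,
        P = Projectivization.mk F ![t ^ (q ^ m + 1), t, 1]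
          (by intro h; simpa using congrFun h 2)} ∪ {R})
    (Ca : F → Set (ℙ F (Fin 3 → F)))
    (hCa : ∀ a : F, Ca a = {P : ℙ F (Fin 3 → F) | ∃ t : F, N t = a ∧
        P = Projectivization.mk F ![t ^ (q ^ m + 1), t, 1]
          (by intro h; simpa using congrFun h 2)})
    (Ja : F → Set (ℙ F (Fin 3 → F)))
    (hJa : ∀ a : F, Ja a = {P : ℙ F (Fin 3 → F) | ∃ t : F, N t = a ∧
        P = Projectivization.mk F ![-t, 0, 1]
          (by intro h; simpa using congrFun h 2)})
    (C₁ : Set (ℙ F (Fin 3 → F)))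
    (hC₁ : C₁ = {P : ℙ F (Fin 3 → F) | ∃ (x : F) (hx : x ≠ 0),
        P = Projectivization.mk F ![x ^ (q ^ (2 * m)), x ^ (q ^ m), x]
          (by intro h; exact hx (by simpa using congrFun h 2))})
    (T : Set F) (hT : ∀ a ∈ T, a ≠ 0 ∧ a ^ q = a) (h1T : (1 : F) ∈ T)
    (X : Set (ℙ F (Fin 3 → F)))
    (hX : X = (C \ ⋃ a ∈ T, Ca a) ∪ ⋃ a ∈ T, Ja a) :
    ∀ P ∈ X, ∀ P' ∈ X, P ≠ P' → ∀ S ∈ C₁,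
      S.rep ∉ Submodule.span F ({P.rep, P'.rep} : Set (Fin 3 → F)) := by
  -- basic numerical facts
  have hq2 : 2 ≤ q := hq.two_le
  have hn1 : n ≠ 0 := by omega
  have hqqn : q ≤ q ^ n := Nat.le_self_pow hn1 q
  have hdvd : (q - 1) ∣ (q ^ n - 1) := by
    simpa using Nat.sub_dvd_pow_sub_pow q 1 n
  set e : ℕ := (q ^ n - 1) / (q - 1) with he_def
  have he : e * (q - 1) = q ^ n - 1 := Nat.div_mul_cancel hdvd
  have hepos : 0 < e := Nat.div_pos (by omega) (by omega)
  -- norm facts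
  have hNmul : ∀ a b : F, N (a * b) = N a * N b := by
    intro a b; rw [hN, hN, hN, mul_pow]
  have hN0 : ∀ a : F, N a = 0 ↔ a = 0 := by
    intro a; rw [hN]; exact pow_eq_zero_iff hepos.ne'
  have hN1 : N 1 = 1 := by rw [hN]; exact one_pow _
  have hNq : ∀ a : F, (N a) ^ q = N a := by
    intro a
    rcases eq_or_ne a 0 with rfl | ha
    · rw [hN, zero_pow hepos.ne', zero_pow (by omega)]
    · have h1 : a ^ (q ^ n - 1) = 1 := by
        have h2 := FiniteField.pow_card_sub_one_eq_one a ha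
        rwa [hF] at h2
      have hqe : e * q = e + (q ^ n - 1) := by
        calc e * q = e * (1 + (q - 1)) := by congr 1; omega
        _ = e + e * (q - 1) := by ring
        _ = e + (q ^ n - 1) := by rw [he]
      rw [hN, ← pow_mul, hqe, pow_add, h1, mul_one]
  have hNqpow : ∀ (a : F) (j : ℕ), (N a) ^ (q ^ j) = N a := by
    intro a j
    induction j with
    | zero => simp
    | succ j ih => rw [pow_succ, pow_mul, ih, hNq]
  have hNσ : ∀ a : F, N (a ^ (q ^ m)) = N a := by
    intro a
    have h1 : (a ^ (q ^ m)) ^ e = (a ^ e) ^ (q ^ m) := by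
      rw [← pow_mul, mul_comm, pow_mul]
    rw [hN, h1, ← hN, hNqpow a m]
  -- characteristic
  obtain ⟨p, k, hpp, hk, hpk⟩ := hq
  have hppn : Nat.Prime p := hpp.nat_prime
  haveI : Fact (Nat.Prime p) := ⟨hppn⟩
  haveI hcharF : CharP F p := by
    haveI := ringChar.charP F
    obtain ⟨j, hrc_prime, hcard⟩ := FiniteField.card F (ringChar F)
    have h1 : p ^ (k * n) = ringChar F ^ (j : ℕ) := by
      rw [pow_mul, hpk, ← hF, hcard]
    have h2 : p ∣ ringChar F ^ (j : ℕ) := by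
      rw [← h1]
      exact dvd_pow_self p (by positivity)
    have h3 : p = ringChar F :=
      (Nat.prime_dvd_prime_iff_eq hppn hrc_prime).mp (hppn.dvd_of_dvd_pow h2)
    rwa [h3]
  have hsub : ∀ a b : F, (a - b) ^ (q ^ m) = a ^ (q ^ m) - b ^ (q ^ m) := by
    intro a b
    have h1 : q ^ m = p ^ (k * m) := by rw [pow_mul, hpk]
    rw [h1]
    exact sub_pow_char_pow a b (k * m)
  -- classification of points of X
  have hclass : ∀ Q ∈ X, Q = R ∨
      (∃ t : F, N t ∉ T ∧ Q = Projectivization.mk F ![t ^ (q ^ m + 1), t, 1]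
        (by intro h; simpa using congrFun h 2)) ∨
      (∃ t : F, N t ∈ T ∧ Q = Projectivization.mk F ![-t, 0, 1]
        (by intro h; simpa using congrFun h 2)) := by
    intro Q hQ
    rw [hX] at hQ
    rcases hQ with ⟨hQC, hQn⟩ | hQJ
    · rw [hC] at hQC
      rcases hQC with ⟨t, ht⟩ | hQR
      · right; left
        refine ⟨t, ?_, ht⟩
        intro hNtT
        apply hQn
        refine Set.mem_biUnion hNtT ?_
        rw [hCa]
        exact ⟨t, rfl, ht⟩
      · left; exact hQR
    · simp only [Set.mem_iUnion] at hQJ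
      obtain ⟨a, haT, hQa⟩ := hQJ
      rw [hJa] at hQa
      obtain ⟨t, hNt, ht⟩ := hQa
      right; right
      exact ⟨t, hNt ▸ haT, ht⟩
  -- representative extraction
  have hrep : ∀ (Q : ℙ F (Fin 3 → F)) (v : Fin 3 → F) (hv : v ≠ 0),
      Q = Projectivization.mk F v hv → ∃ c : Fˣ, Q.rep = (c : F) • v := by
    intro Q v hv hQ
    have h1 : Projectivization.mk F Q.rep Q.rep_nonzero = Projectivization.mk F v hv := by
      rw [Projectivization.mk_rep, hQ]
    obtain ⟨a, ha⟩ := (Projectivization.mk_eq_mk_iff F _ _ _ _).mp h1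
    exact ⟨a, by rw [← ha, Units.smul_def]⟩
  -- main body
  intro P hP P' hP' hne S hS hmem
  rw [hC₁] at hS
  obtain ⟨x, hx, hSx⟩ := hS
  have hy : x ^ (q ^ m) ≠ 0 := pow_ne_zero _ hx
  set u : F := x ^ (q ^ m) * x⁻¹ with hu_def
  have hu0 : u ≠ 0 := mul_ne_zero hy (inv_ne_zero hx)
  have hNu : N u = 1 := by
    have h1 : N u = N (x ^ (q ^ m)) * N x⁻¹ := hNmul _ _
    have h2 : N x * N x⁻¹ = 1 := by rw [← hNmul, mul_inv_cancel₀ hx, hN1]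
    rw [h1, hNσ, h2]
  have hw_ne : (![u ^ (q ^ m) * u, u, 1] : Fin 3 → F) ≠ 0 := by
    intro h; simpa using congrFun h 2
  have hq2m : q ^ (2 * m) = q ^ m * q ^ m := by rw [two_mul, pow_add]
  have hvw : (![x ^ q ^ (2 * m), x ^ q ^ m, x] : Fin 3 → F)
      = x • ![u ^ (q ^ m) * u, u, 1] := by
    funext i
    fin_cases i
    · show x ^ q ^ (2 * m) = x * (u ^ (q ^ m) * u)
      rw [hu_def, mul_pow, inv_pow, ← pow_mul, ← hq2m]
      field_simp
    · show x ^ q ^ m = x * u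
      rw [hu_def]
      field_simp
    · show x = x * 1
      rw [mul_one]
  obtain ⟨c, hc⟩ := hrep S _ _ hSx
  rw [hvw, smul_smul] at hc
  have hcx : (c : F) * x ≠ 0 := mul_ne_zero c.ne_zero hx
  -- reduce span membership to normalized vectors
  have hfinal : ∀ (pv pv' : Fin 3 → F), (∃ a : Fˣ, P.rep = (a : F) • pv) →
      (∃ b : Fˣ, P'.rep = (b : F) • pv') →
      ∃ α β : F, α • pv + β • pv' = ![u ^ (q ^ m) * u, u, 1] := by
    rintro pv pv' ⟨a, ha⟩ ⟨b, hb⟩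
    have h1 : ((c : F) * x) • (![u ^ (q ^ m) * u, u, 1] : Fin 3 → F)
        ∈ Submodule.span F {(a : F) • pv, (b : F) • pv'} := by
      rw [← hc, ← ha, ← hb]; exact hmem
    have h2 : Submodule.span F {(a : F) • pv, (b : F) • pv'}
        ≤ Submodule.span F {pv, pv'} := by
      rw [Submodule.span_le]
      rintro y hy
      simp only [Set.mem_insert_iff, Set.mem_singleton_iff] at hy
      rcases hy with rfl | rfl
      · exact Submodule.smul_mem _ _ (Submodule.subset_span (by simp))
      · exact Submodule.smul_mem _ _ (Submodule.subset_span (by simp))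
    have h3 := h2 h1
    have h4 := Submodule.smul_mem _ ((c : F) * x)⁻¹ h3
    rw [smul_smul, inv_mul_cancel₀ hcx, one_smul] at h4
    exact Submodule.mem_span_pair.mp h4
  -- case analysis
  rcases hclass P hP with hPR | ⟨t, hNtT, hPt⟩ | ⟨t, hNtT, hPt⟩ <;>
    rcases hclass P' hP' with hPR' | ⟨s, hNsT, hPs'⟩ | ⟨s, hNsT, hPs'⟩
  -- (R, R)
  · exact hne (hPR.trans hPR'.symm)
  -- (R, C s)
  · obtain ⟨α, β, hab⟩ := hfinal ![1, 0, 0] ![s ^ (q ^ m + 1), s, 1]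
      (hrep P _ (by intro h; simpa using congrFun h 0) (hPR.trans hR))
      (hrep P' _ (by intro h; simpa using congrFun h 2) hPs')
    have e1 : β * s = u := by simpa using congrFun hab 1
    have e2 : β = 1 := by simpa using congrFun hab 2
    have hsu : s = u := by rw [e2, one_mul] at e1; exact e1
    exact hNsT (by rw [hsu, hNu]; exact h1T)
  -- (R, J s)
  · obtain ⟨α, β, hab⟩ := hfinal ![1, 0, 0] ![-s, 0, 1]
      (hrep P _ (by intro h; simpa using congrFun h 0) (hPR.trans hR))
      (hrep P' _ (by intro h; simpa using congrFun h 2) hPs')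
    have e1 : (0 : F) = u := by simpa using congrFun hab 1
    exact hu0 e1.symm
  -- (C t, R)
  · obtain ⟨α, β, hab⟩ := hfinal ![t ^ (q ^ m + 1), t, 1] ![1, 0, 0]
      (hrep P _ (by intro h; simpa using congrFun h 2) hPt)
      (hrep P' _ (by intro h; simpa using congrFun h 0) (hPR'.trans hR))
    have e1 : α * t = u := by simpa using congrFun hab 1
    have e2 : α = 1 := by simpa using congrFun hab 2
    have htu : t = u := by rw [e2, one_mul] at e1; exact e1
    exact hNtT (by rw [htu, hNu]; exact h1T)
  -- (C t, C s)
  · obtain ⟨α, β, hab⟩ := hfinal ![t ^ (q ^ m + 1), t, 1] ![s ^ (q ^ m + 1), s, 1]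
      (hrep P _ (by intro h; simpa using congrFun h 2) hPt)
      (hrep P' _ (by intro h; simpa using congrFun h 2) hPs')
    have hts : t ≠ s := by
      intro h
      apply hne
      rw [hPt, hPs', h]
    have htu : t ≠ u := by
      intro h
      exact hNtT (by rw [h, hNu]; exact h1T)
    have e0 : α * (t ^ (q ^ m) * t) + β * (s ^ (q ^ m) * s) = u ^ (q ^ m) * u := by
      have := congrFun hab 0
      simp only [Pi.add_apply, Pi.smul_apply, smul_eq_mul, Matrix.cons_val_zero] at this
      rw [pow_succ, pow_succ] at this
      exact this
    have e1 : α * t + β * s = u := by simpa using congrFun hab 1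
    have e2 : α + β = 1 := by simpa using congrFun hab 2
    have := core_CC (q ^ m) N hNmul hNσ hsub hN0 hts htu e0 e1 e2
    rw [hNu] at this
    exact hNsT (this ▸ h1T)
  -- (C t, J s)
  · obtain ⟨α, β, hab⟩ := hfinal ![t ^ (q ^ m + 1), t, 1] ![-s, 0, 1]
      (hrep P _ (by intro h; simpa using congrFun h 2) hPt)
      (hrep P' _ (by intro h; simpa using congrFun h 2) hPs')
    have htu : t ≠ u := by
      intro h
      exact hNtT (by rw [h, hNu]; exact h1T)
    have e0 : α * (t ^ (q ^ m) * t) + β * (-s) = u ^ (q ^ m) * u := by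
      have := congrFun hab 0
      simp only [Pi.add_apply, Pi.smul_apply, smul_eq_mul, Matrix.cons_val_zero] at this
      rw [pow_succ] at this
      linear_combination this
    have e1 : α * t = u := by simpa using congrFun hab 1
    have e2 : α + β = 1 := by simpa using congrFun hab 2
    have := core_CJ (q ^ m) N hNmul hNσ hsub hN0 htu e0 e1 e2
    rw [hNu, one_mul] at this
    exact hNtT (this ▸ hNsT)
  -- (J t, R)
  · obtain ⟨α, β, hab⟩ := hfinal ![-t, 0, 1] ![1, 0, 0]
      (hrep P _ (by intro h; simpa using congrFun h 2) hPt)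
      (hrep P' _ (by intro h; simpa using congrFun h 0) (hPR'.trans hR))
    have e1 : (0 : F) = u := by simpa using congrFun hab 1
    exact hu0 e1.symm
  -- (J t, C s)
  · obtain ⟨α, β, hab⟩ := hfinal ![-t, 0, 1] ![s ^ (q ^ m + 1), s, 1]
      (hrep P _ (by intro h; simpa using congrFun h 2) hPt)
      (hrep P' _ (by intro h; simpa using congrFun h 2) hPs')
    have hsu : s ≠ u := by
      intro h
      exact hNsT (by rw [h, hNu]; exact h1T)
    have e0 : β * (s ^ (q ^ m) * s) + α * (-t) = u ^ (q ^ m) * u := by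
      have := congrFun hab 0
      simp only [Pi.add_apply, Pi.smul_apply, smul_eq_mul, Matrix.cons_val_zero] at this
      rw [pow_succ] at this
      linear_combination this
    have e1 : β * s = u := by simpa using congrFun hab 1
    have e2 : β + α = 1 := by
      have h := congrFun hab 2
      simp at h
      linear_combination h
    have := core_CJ (q ^ m) N hNmul hNσ hsub hN0 hsu e0 e1 e2
    rw [hNu, one_mul] at this
    exact hNsT (this ▸ hNtT)
  -- (J t, J s)
  · obtain ⟨α, β, hab⟩ := hfinal ![-t, 0, 1] ![-s, 0, 1]
      (hrep P _ (by intro h; simpa using congrFun h 2) hPt)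
      (hrep P' _ (by intro h; simpa using congrFun h 2) hPs')
    have e1 : (0 : F) = u := by simpa using congrFun hab 1
    exact hu0 e1.symm
end
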